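/- arXiv:hep-th/9609199 — 4 statements merged into one kernel-verified Lean document; each statement's English description precedes it below -/
import Mathlib

section
/- The hyper-Jacobians are traceless: for 1 ≤ r ≤ n-1, the contraction over a repeated index ζ vanishes: Σ_ζ J^{ρ_{r+1},...,ρ_{n-1},ζ}_{σ_1,...,σ_{r-1},ζ} = 0. -/
/-!
Split off the last lower index `η` of the hyper-Jacobian, so that the contraction becomes a
double sum over `(ζ, η)` of `ε^{…, η, ρ, ζ} ψ_{η ζ}` times factors not involving `η` or `ζ`.
Exchanging `η` and `ζ` is a transposition of two slots of `ε`, which flips its sign, while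
`ψ_{η ζ}` is symmetric; so the double sum is antisymmetric in `(ζ, η)` and vanishes.
-/

open scoped BigOperators

/-- The Levi-Civita symbol on `n` indices: the sign of `f` if it is a
permutation of `Fin n`, and `0` otherwise. -/
noncomputable def eps (n : ℕ) (f : Fin n → Fin n) : ℝ :=
  if h : Function.Bijective f then ((Equiv.Perm.sign (Equiv.ofBijective f h) : ℤ) : ℝ) else 0

/-- The hyper-Jacobian `J^{ρ_{r+1},…,ρ_n}_{σ_1,…,σ_r}
  = Σ_{ρ_1,…,ρ_r} ε^{ρ_1,…,ρ_n} ∏_{i=1}^r ψ_{ρ_i σ_i}`. -/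
noncomputable def hyperJ (n r : ℕ) (hr : r ≤ n) (ψ : Fin n → Fin n → ℝ)
    (σ : Fin r → Fin n) (ρ : Fin (n - r) → Fin n) : ℝ :=
  ∑ g : Fin r → Fin n,
    eps n (fun i => Fin.append g ρ (Fin.cast (Nat.add_sub_cancel' hr).symm i)) *
      ∏ i, ψ (g i) (σ i)

theorem sum_sum_eq_zero_of_antisymm {ι M : Type*} [Fintype ι] [AddCommGroup M]
    [IsAddTorsionFree M] {f : ι → ι → M} (hf : ∀ i j, f i j = -f j i) :
    ∑ i, ∑ j, f i j = 0 := by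
  refine self_eq_neg.mp ?_
  calc ∑ i, ∑ j, f i j = ∑ j, ∑ i, f i j := Finset.sum_comm
    _ = ∑ j, ∑ i, -f j i := Fintype.sum_congr _ _ fun i ↦ Fintype.sum_congr _ _ fun j ↦ hf j i
    _ = -∑ i, ∑ j, f i j := by simp only [Finset.sum_neg_distrib]

theorem Fin.append_snoc_snoc_comp_swap {α : Type*} {m k : ℕ} (u : Fin m → α) (v : Fin k → α)
    (x y : α) :
    Fin.append (Fin.snoc u x) (Fin.snoc v y) ∘
        Equiv.swap (Fin.castAdd (k + 1) (Fin.last m)) (Fin.last (m + 1 + k)) =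
      Fin.append (Fin.snoc u y) (Fin.snoc v x) := by
  funext i
  refine Fin.addCases (fun j ↦ ?_) (fun j ↦ ?_) i
  · refine Fin.lastCases ?_ (fun j ↦ ?_) j
    · simp [Fin.append_snoc]
    · rw [Function.comp_apply, Equiv.swap_apply_of_ne_of_ne] <;> simp [Fin.ext_iff] <;> omega
  · refine Fin.lastCases ?_ (fun j ↦ ?_) j
    · simp [Fin.append_snoc]
    · rw [Function.comp_apply, Equiv.swap_apply_of_ne_of_ne] <;> simp [Fin.ext_iff] <;> omega

theorem eps_comp_swap {n : ℕ} (f : Fin n → Fin n) {a b : Fin n} (hab : a ≠ b) :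
    eps n (f ∘ Equiv.swap a b) = -eps n f := by
  unfold eps
  by_cases hf : Function.Bijective f
  · have hfs : Function.Bijective (f ∘ Equiv.swap a b) := hf.comp (Equiv.swap a b).bijective
    have hperm : Equiv.ofBijective _ hfs = Equiv.ofBijective f hf * Equiv.swap a b := by
      ext; rfl
    rw [dif_pos hfs, dif_pos hf, hperm, Equiv.Perm.sign_mul, Equiv.Perm.sign_swap hab]
    push_cast
    ring
  · have hfs : ¬Function.Bijective (f ∘ Equiv.swap a b) := fun h ↦
      hf (by simpa [Function.comp_assoc] using h.comp (Equiv.swap a b).bijective)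
    rw [dif_neg hfs, dif_neg hf, neg_zero]

theorem eps_append_snoc_snoc_comm {n m k : ℕ} (H : n = m + 1 + (k + 1)) (u : Fin m → Fin n)
    (v : Fin k → Fin n) (x y : Fin n) :
    eps n (Fin.append (Fin.snoc u x) (Fin.snoc v y) ∘ Fin.cast H) =
      -eps n (Fin.append (Fin.snoc u y) (Fin.snoc v x) ∘ Fin.cast H) := by
  set a := Fin.castAdd (k + 1) (Fin.last m)
  set b := Fin.last (m + 1 + k)
  have hab : Fin.cast H.symm a ≠ Fin.cast H.symm b := by simp [a, b, Fin.ext_iff]; omega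
  have hcast : Fin.cast H ∘ Equiv.swap (Fin.cast H.symm a) (Fin.cast H.symm b) =
      Equiv.swap a b ∘ Fin.cast H := by
    rw [← (Fin.cast_injective H).swap_comp]
    simp
  rw [← eps_comp_swap _ hab, Function.comp_assoc, hcast, ← Function.comp_assoc,
    Fin.append_snoc_snoc_comp_swap]

theorem hyperJ_snoc_snoc {n r k : ℕ} (hr : r + 1 ≤ n) (hk : n - (r + 1) = k + 1)
    (ψ : Fin n → Fin n → ℝ) (σ : Fin r → Fin n) (τ : Fin n) (ρ : Fin k → Fin n) (ζ : Fin n) :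
    hyperJ n (r + 1) hr ψ (Fin.snoc σ τ)
        (fun i => (Fin.snoc ρ ζ : Fin (k + 1) → Fin n) (Fin.cast hk i)) =
      ∑ η, ∑ g : Fin r → Fin n,
        eps n (Fin.append (Fin.snoc g η) (Fin.snoc ρ ζ) ∘ Fin.cast (by omega)) *
          ((∏ i, ψ (g i) (σ i)) * ψ η τ) := by
  rw [hyperJ, ← Fintype.sum_prod_type']
  refine (Fintype.sum_equiv (Fin.snocEquiv fun _ ↦ Fin n) _ _ fun p ↦ ?_).symm
  simp only [Fin.snocEquiv_apply, Fin.prod_univ_castSucc, Fin.snoc_castSucc, Fin.snoc_last]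
  congr 2
  funext i
  exact (congrFun (Fin.append_cast_right (Fin.snoc p.2 p.1) (Fin.snoc ρ ζ) _ hk)
    (Fin.cast (by omega) i)).symm

/-- The hyper-Jacobians are traceless: for `1 ≤ r ≤ n-1` (here `r = s+1`),
the contraction of the last upper index with the last lower index vanishes. -/
theorem hyperJ_traceless (n s : ℕ) (h : s + 2 ≤ n)
    (ψ : Fin n → Fin n → ℝ) (hψ : ∀ μ ν, ψ μ ν = ψ ν μ)
    (σ : Fin s → Fin n) (ρ : Fin (n - (s + 2)) → Fin n) :
    ∑ ζ : Fin n,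
      hyperJ n (s + 1) (by omega) ψ (Fin.snoc σ ζ)
        (fun i => (Fin.snoc ρ ζ : Fin (n - (s + 2) + 1) → Fin n)
          (Fin.cast (by omega : n - (s + 1) = (n - (s + 2)) + 1) i)) = 0 := by
  simp only [hyperJ_snoc_snoc]
  refine sum_sum_eq_zero_of_antisymm fun ζ η ↦ ?_
  rw [← Finset.sum_neg_distrib]
  refine Fintype.sum_congr _ _ fun g ↦ ?_
  rw [eps_append_snoc_snoc_comm (by omega), hψ]
  ring
end

section
/- If a tensor t in H̃ satisfies C̃ t = 0, then for all μ, ν the tensor (b^μ c^ν + b^ν c^μ) t also satisfies C̃ [(b^μ c^ν + b^ν c^μ) t] = 0. -/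
open scoped BigOperators

/-- If `C̃ t = 0` then `C̃ [(b^μ c^ν + b^ν c^μ) t] = 0`, where
`C̃ = Σ_μ b^μ c*_μ` and `b^μ = op false false μ`, `b*_μ = op false true μ`,
`c^μ = op true false μ`, `c*_μ = op true true μ` are CAR operators on the
tensor product of two fermionic Fock spaces over `ℝ^n`. -/
theorem fock_C_kernel_stable {H : Type*} [AddCommGroup H] [Module ℝ H] {n : ℕ}
    (op : Bool → Bool → Fin n → Module.End ℝ H)
    (hCAR : ∀ fam cr μ fam' cr' ν,
      op fam cr μ * op fam' cr' ν + op fam' cr' ν * op fam cr μ =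
        if fam = fam' ∧ μ = ν ∧ cr ≠ cr' then 1 else 0)
    (t : H) (ht : (∑ ρ : Fin n, op false false ρ * op true true ρ) t = 0)
    (μ ν : Fin n) :
    (∑ ρ : Fin n, op false false ρ * op true true ρ)
      ((op false false μ * op true false ν + op false false ν * op true false μ) t) =
      0 := by
  set b : Fin n → Module.End ℝ H := fun ρ => op false false ρ with hb
  set c : Fin n → Module.End ℝ H := fun ρ => op true false ρ with hc
  set c' : Fin n → Module.End ℝ H := fun ρ => op true true ρ with hc'
  have hbb : ∀ x y, b x * b y = -(b y * b x) := by
    intro x y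
    have h := hCAR false false x false false y
    simp only [ne_eq, not_true_eq_false, and_false, if_false] at h
    exact eq_neg_of_add_eq_zero_left h
  have hbc : ∀ x y, b x * c y = -(c y * b x) := by
    intro x y
    have h := hCAR false false x true false y
    simp only [Bool.false_eq_true, false_and, if_false] at h
    exact eq_neg_of_add_eq_zero_left h
  have hc'b : ∀ x y, c' x * b y = -(b y * c' x) := by
    intro x y
    have h := hCAR true true x false false y
    simp only [Bool.true_eq_false, false_and, if_false] at h
    exact eq_neg_of_add_eq_zero_left h
  have hc'c : ∀ x y, c' x * c y = (if x = y then 1 else 0) - c y * c' x := by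
    intro x y
    have h := hCAR true true x true false y
    simp only [ne_eq, Bool.true_eq_false, not_false_eq_true, and_true, true_and] at h
    exact eq_sub_of_add_eq h
  have key : ∀ ρ m k, b ρ * c' ρ * (b m * c k) =
      b m * c k * (b ρ * c' ρ) - (if ρ = k then b ρ * b m else 0) := by
    intro ρ m k
    have h5 : b ρ * b m * c k = b m * c k * b ρ := by
      calc b ρ * b m * c k = -(b m * b ρ) * c k := by rw [hbb]
        _ = -(b m * (b ρ * c k)) := by noncomm_ring
        _ = -(b m * (-(c k * b ρ))) := by rw [hbc]
        _ = b m * c k * b ρ := by noncomm_ring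
    calc b ρ * c' ρ * (b m * c k)
        = b ρ * (c' ρ * b m) * c k := by noncomm_ring
      _ = b ρ * (-(b m * c' ρ)) * c k := by rw [hc'b]
      _ = -(b ρ * b m * (c' ρ * c k)) := by noncomm_ring
      _ = -(b ρ * b m * ((if ρ = k then 1 else 0) - c k * c' ρ)) := by rw [hc'c]
      _ = b ρ * b m * (c k * c' ρ) - (if ρ = k then b ρ * b m else 0) := by
          rw [mul_sub, mul_ite, mul_one, mul_zero]; noncomm_ring
      _ = b m * c k * (b ρ * c' ρ) - (if ρ = k then b ρ * b m else 0) := by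
          rw [← mul_assoc, h5, mul_assoc]
  set A : Module.End ℝ H := b μ * c ν + b ν * c μ with hA
  have main : (∑ ρ : Fin n, b ρ * c' ρ) * A = A * (∑ ρ : Fin n, b ρ * c' ρ) := by
    rw [Finset.sum_mul, Finset.mul_sum]
    have expand : ∀ ρ : Fin n, b ρ * c' ρ * A =
        A * (b ρ * c' ρ) -
          ((if ρ = ν then b ρ * b μ else 0) + (if ρ = μ then b ρ * b ν else 0)) := by
      intro ρ
      rw [hA, mul_add, add_mul, key ρ μ ν, key ρ ν μ]
      abel
    rw [Finset.sum_congr rfl fun ρ _ => expand ρ, Finset.sum_sub_distrib,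
      Finset.sum_add_distrib]
    simp only [Finset.sum_ite_eq', Finset.mem_univ, if_true]
    have : b ν * b μ + b μ * b ν = 0 := by rw [hbb ν μ]; abel
    rw [this, sub_zero]
  calc (∑ ρ : Fin n, b ρ * c' ρ) (A t)
      = ((∑ ρ : Fin n, b ρ * c' ρ) * A) t := rfl
    _ = (A * (∑ ρ : Fin n, b ρ * c' ρ)) t := by rw [main]
    _ = A ((∑ ρ : Fin n, b ρ * c' ρ) t) := rfl
    _ = A 0 := by rw [ht]
    _ = 0 := map_zero A
end

section
/- A smooth first-order Lagrangian L(x^μ, ψ^A, ψ^A_μ) satisfying the symmetrized integrability condition (∂^μ_A ∂^ν_B + ∂^ν_A ∂^μ_B) L = 0 for all μ, ν, A, B is a polynomial of degree at most n in the first derivatives, of the form L = Σ_{k=0}^n (1/k!) L^{μ_1,...,μ_k}_{A_1,...,A_k} ∏_{i=1}^k ψ^{A_i}_{μ_i}, where the coefficient functions depend only on (x, ψ), are completely antisymmetric in the upper indices μ_1,...,μ_k and in the lower indices A_1,...,A_k. -/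
open scoped BigOperators

/-- The first-order configuration space: points `(x^μ, ψ^A, ψ^A_μ)`. -/
abbrev Conf1 (n N : ℕ) := (Fin n → ℝ) × (Fin N → ℝ) × (Fin N → Fin n → ℝ)

/-- The coordinate direction `∂/∂ψ^A_μ` in the velocity variables. -/
def velDir (n N : ℕ) (A : Fin N) (μ : Fin n) : Conf1 n N :=
  (0, 0, fun B ν => if B = A ∧ ν = μ then 1 else 0)

namespace TFOP

variable {n N : ℕ}

/-- Directional derivative operator. -/
noncomputable def Dd (d : Conf1 n N) (f : Conf1 n N → ℝ) : Conf1 n N → ℝ :=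
  fun q => fderiv ℝ f q d

lemma contDiff_Dd {f : Conf1 n N → ℝ} (hf : ContDiff ℝ (⊤ : ℕ∞) f) (d : Conf1 n N) :
    ContDiff ℝ (⊤ : ℕ∞) (Dd d f) := by
  have h1 : ContDiff ℝ (⊤ : ℕ∞) (fderiv ℝ f) := hf.fderiv_right (by simp)
  exact (ContinuousLinearMap.apply ℝ ℝ d).contDiff.comp h1

lemma Dd_eq_sndFDeriv {f : Conf1 n N → ℝ} (hf : ContDiff ℝ (⊤ : ℕ∞) f) (u v : Conf1 n N)
    (p : Conf1 n N) : Dd u (Dd v f) p = fderiv ℝ (fderiv ℝ f) p u v := by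
  have hdf : ContDiff ℝ (⊤ : ℕ∞) (fderiv ℝ f) := hf.fderiv_right (by simp)
  have h1 : HasFDerivAt (fderiv ℝ f) (fderiv ℝ (fderiv ℝ f) p) p :=
    ((hdf.differentiable (by simp)) p).hasFDerivAt
  have h2 := ((ContinuousLinearMap.apply ℝ ℝ v).hasFDerivAt).comp p h1
  have h3 := h2.fderiv
  show fderiv ℝ (fun q => fderiv ℝ f q v) p u = _
  rw [show (fun q => fderiv ℝ f q v)
      = (ContinuousLinearMap.apply ℝ ℝ v) ∘ (fderiv ℝ f) from rfl, h3]
  rfl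

lemma Dd_comm {f : Conf1 n N → ℝ} (hf : ContDiff ℝ (⊤ : ℕ∞) f) (a b : Conf1 n N) :
    Dd a (Dd b f) = Dd b (Dd a f) := by
  funext p
  rw [Dd_eq_sndFDeriv hf a b p, Dd_eq_sndFDeriv hf b a p]
  exact (hf.contDiffAt.isSymmSndFDerivAt (by rw [minSmoothness_of_isRCLikeNormedField]; exact WithTop.coe_le_coe.mpr (le_top : (2 : ℕ∞) ≤ ⊤))) a b

/-- Iterated directional derivative along a list of directions (head is outermost). -/
noncomputable def DdL : List (Conf1 n N) → (Conf1 n N → ℝ) → Conf1 n N → ℝ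
  | [], f => f
  | d :: l, f => Dd d (DdL l f)

lemma contDiff_DdL {f : Conf1 n N → ℝ} (hf : ContDiff ℝ (⊤ : ℕ∞) f) (l : List (Conf1 n N)) :
    ContDiff ℝ (⊤ : ℕ∞) (DdL l f) := by
  induction l with
  | nil => exact hf
  | cons d l ih => exact contDiff_Dd ih d

lemma DdL_perm {f : Conf1 n N → ℝ} (hf : ContDiff ℝ (⊤ : ℕ∞) f) {l l' : List (Conf1 n N)}
    (h : l.Perm l') : DdL l f = DdL l' f := by
  induction h with
  | nil => rfl
  | cons x h ih => simp only [DdL, ih]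
  | swap x y l => simp only [DdL]; exact Dd_comm (contDiff_DdL hf l) y x
  | trans h1 h2 ih1 ih2 => rw [ih1, ih2]

lemma ofFn_perm {α : Type*} {k : ℕ} (g : Fin k → α) (P : Equiv.Perm (Fin k)) :
    (List.ofFn (fun i => g (P i))).Perm (List.ofFn g) := by
  rw [List.ofFn_eq_map, List.ofFn_eq_map]
  have h1 : ((List.finRange k).map (⇑P)).Perm (List.finRange k) := by
    apply List.perm_of_nodup_nodup_toFinset_eq
    · exact (List.nodup_finRange k).map P.injective
    · exact List.nodup_finRange k
    · ext a
      simp only [List.mem_toFinset, List.mem_map, List.mem_finRange, true_and, iff_true]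
      exact ⟨P.symm a, by simp⟩
  have := h1.map g
  simpa [List.map_map, Function.comp_def] using this

end TFOP

section Main

open TFOP

variable {n N : ℕ} {L : Conf1 n N → ℝ}

/-- The iterated velocity derivative with given index tuples. -/
noncomputable def Tder (L : Conf1 n N → ℝ) (k : ℕ) (μs : Fin k → Fin n)
    (As : Fin k → Fin N) : Conf1 n N → ℝ :=
  DdL (List.ofFn fun i => velDir n N (As i) (μs i)) L

lemma Tder_pairPerm (hL : ContDiff ℝ (⊤ : ℕ∞) L) {k : ℕ} (μs : Fin k → Fin n)
    (As : Fin k → Fin N) (P : Equiv.Perm (Fin k)) :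
    Tder L k (fun i => μs (P i)) (fun i => As (P i)) = Tder L k μs As := by
  exact DdL_perm hL (ofFn_perm (fun i => velDir n N (As i) (μs i)) P)

lemma DdL_antisym (hL : ContDiff ℝ (⊤ : ℕ∞) L)
    (hsym : ∀ (p : Conf1 n N) (A B : Fin N) (μ ν : Fin n),
      fderiv ℝ (fun q => fderiv ℝ L q (velDir n N A μ)) p (velDir n N B ν) +
        fderiv ℝ (fun q => fderiv ℝ L q (velDir n N A ν)) p (velDir n N B μ) = 0)
    (l : List (Conf1 n N)) (A B : Fin N) (μ ν : Fin n) :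
    DdL (l ++ [velDir n N B ν, velDir n N A μ]) L
      = - DdL (l ++ [velDir n N B μ, velDir n N A ν]) L := by
  induction l with
  | nil =>
    funext p
    have h := hsym p A B μ ν
    have e1 : DdL ([] ++ [velDir n N B ν, velDir n N A μ]) L p
        = fderiv ℝ (fun q => fderiv ℝ L q (velDir n N A μ)) p (velDir n N B ν) := rfl
    have e2 : DdL ([] ++ [velDir n N B μ, velDir n N A ν]) L p
        = fderiv ℝ (fun q => fderiv ℝ L q (velDir n N A ν)) p (velDir n N B μ) := rfl
    rw [Pi.neg_apply, e1, e2]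
    linarith
  | cons d l ih =>
    show TFOP.Dd d (DdL (l ++ [velDir n N B ν, velDir n N A μ]) L) = _
    rw [ih]
    funext p
    show fderiv ℝ (fun q => -(DdL (l ++ [velDir n N B μ, velDir n N A ν]) L q)) p d = _
    rw [fderiv_fun_neg]
    simp [TFOP.DdL, TFOP.Dd]

lemma Tder_antisym_last (hL : ContDiff ℝ (⊤ : ℕ∞) L)
    (hsym : ∀ (p : Conf1 n N) (A B : Fin N) (μ ν : Fin n),
      fderiv ℝ (fun q => fderiv ℝ L q (velDir n N A μ)) p (velDir n N B ν) +
        fderiv ℝ (fun q => fderiv ℝ L q (velDir n N A ν)) p (velDir n N B μ) = 0)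
    (m : ℕ) (μs : Fin (m+2) → Fin n) (As : Fin (m+2) → Fin N) :
    Tder L (m+2) (fun t => μs (Equiv.swap ((Fin.last m).castSucc) (Fin.last (m+1)) t)) As
      = - Tder L (m+2) μs As := by
  set a : Fin (m+2) := (Fin.last m).castSucc with ha
  set b : Fin (m+2) := Fin.last (m+1) with hb
  have hab : a ≠ b := (Fin.castSucc_lt_last (Fin.last m)).ne
  have decomp : ∀ g : Fin (m+2) → Conf1 n N,
      List.ofFn g = (List.ofFn fun t : Fin m => g (t.castSucc.castSucc)) ++ [g a, g b] := by
    intro g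
    rw [List.ofFn_succ' g, List.ofFn_succ']
    simp [List.concat_eq_append, ha, hb]
  have hne1 : ∀ t : Fin m, t.castSucc.castSucc ≠ a := by
    intro t h
    have := (Fin.castSucc_lt_last t).ne
    exact this (Fin.castSucc_injective _ h)
  have hne2 : ∀ t : Fin m, t.castSucc.castSucc ≠ b := by
    intro t
    exact (Fin.castSucc_lt_last t.castSucc).ne
  unfold Tder
  rw [decomp, decomp]
  have hfront : (List.ofFn fun t : Fin m =>
        velDir n N (As (t.castSucc.castSucc)) (μs (Equiv.swap a b (t.castSucc.castSucc))))
      = (List.ofFn fun t : Fin m =>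
        velDir n N (As (t.castSucc.castSucc)) (μs (t.castSucc.castSucc))) := by
    apply congrArg List.ofFn
    funext t
    rw [Equiv.swap_apply_of_ne_of_ne (hne1 t) (hne2 t)]
  rw [hfront]
  have h1 : Equiv.swap a b a = b := Equiv.swap_apply_left a b
  have h2 : Equiv.swap a b b = a := Equiv.swap_apply_right a b
  simp only [h1, h2]
  exact DdL_antisym hL hsym _ (As b) (As a) (μs a) (μs b)

lemma exists_perm_pair {α : Type*} [DecidableEq α] {a b i j : α} (hab : a ≠ b)
    (hij : i ≠ j) : ∃ σ : Equiv.Perm α, σ a = i ∧ σ b = j := by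
  refine ⟨Equiv.swap (Equiv.swap a i b) j * Equiv.swap a i, ?_, ?_⟩
  · have h1 : Equiv.swap a i b ≠ i := by
      intro h
      have : Equiv.swap a i b = Equiv.swap a i a := by rw [h, Equiv.swap_apply_left]
      exact hab.symm ((Equiv.swap a i).injective this)
    show Equiv.swap (Equiv.swap a i b) j (Equiv.swap a i a) = i
    rw [Equiv.swap_apply_left, Equiv.swap_apply_of_ne_of_ne (Ne.symm h1) hij]
  · show Equiv.swap (Equiv.swap a i b) j (Equiv.swap a i b) = j
    rw [Equiv.swap_apply_left]

lemma Tder_swap_mu (hL : ContDiff ℝ (⊤ : ℕ∞) L)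
    (hsym : ∀ (p : Conf1 n N) (A B : Fin N) (μ ν : Fin n),
      fderiv ℝ (fun q => fderiv ℝ L q (velDir n N A μ)) p (velDir n N B ν) +
        fderiv ℝ (fun q => fderiv ℝ L q (velDir n N A ν)) p (velDir n N B μ) = 0)
    {k : ℕ} (μs : Fin k → Fin n) (As : Fin k → Fin N) {i j : Fin k} (hij : i ≠ j) :
    Tder L k (fun t => μs (Equiv.swap i j t)) As = - Tder L k μs As := by
  obtain ⟨m, rfl⟩ : ∃ m, k = m + 2 := by
    have h1 : i.val ≠ j.val := fun h => hij (Fin.ext h)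
    have h2 := i.isLt
    have h3 := j.isLt
    exact ⟨k - 2, by omega⟩
  set a : Fin (m+2) := (Fin.last m).castSucc with ha
  set b : Fin (m+2) := Fin.last (m+1) with hb
  have hab : a ≠ b := (Fin.castSucc_lt_last (Fin.last m)).ne
  obtain ⟨σ, hσa, hσb⟩ := exists_perm_pair hab hij
  have e3 : (fun t => μs (Equiv.swap i j (σ t)))
      = (fun t => μs (σ (Equiv.swap a b t))) := by
    funext t
    rcases eq_or_ne t a with rfl | hta
    · rw [hσa, Equiv.swap_apply_left, Equiv.swap_apply_left, hσb]
    rcases eq_or_ne t b with rfl | htb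
    · rw [hσb, Equiv.swap_apply_right, Equiv.swap_apply_right, hσa]
    have h1 : σ t ≠ i := fun h => hta (by
      have : t = σ.symm i := by rw [← h]; simp
      rw [this, ← hσa]; simp)
    have h2 : σ t ≠ j := fun h => htb (by
      have : t = σ.symm j := by rw [← h]; simp
      rw [this, ← hσb]; simp)
    rw [Equiv.swap_apply_of_ne_of_ne h1 h2, Equiv.swap_apply_of_ne_of_ne hta htb]
  calc Tder L (m+2) (fun t => μs (Equiv.swap i j t)) As
      = Tder L (m+2) (fun t => μs (Equiv.swap i j (σ t))) (fun t => As (σ t)) :=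
        (Tder_pairPerm hL (fun s => μs (Equiv.swap i j s)) As σ).symm
    _ = Tder L (m+2) (fun t => μs (σ (Equiv.swap a b t))) (fun t => As (σ t)) := by
        rw [e3]
    _ = - Tder L (m+2) (fun s => μs (σ s)) (fun s => As (σ s)) :=
        Tder_antisym_last hL hsym m (fun s => μs (σ s)) (fun s => As (σ s))
    _ = - Tder L (m+2) μs As := by rw [Tder_pairPerm hL μs As σ]

lemma Tder_swap_A (hL : ContDiff ℝ (⊤ : ℕ∞) L)
    (hsym : ∀ (p : Conf1 n N) (A B : Fin N) (μ ν : Fin n),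
      fderiv ℝ (fun q => fderiv ℝ L q (velDir n N A μ)) p (velDir n N B ν) +
        fderiv ℝ (fun q => fderiv ℝ L q (velDir n N A ν)) p (velDir n N B μ) = 0)
    {k : ℕ} (μs : Fin k → Fin n) (As : Fin k → Fin N) {i j : Fin k} (hij : i ≠ j) :
    Tder L k μs (fun t => As (Equiv.swap i j t)) = - Tder L k μs As := by
  have e := Tder_pairPerm hL (fun s => μs (Equiv.swap i j s)) As (Equiv.swap i j)
  have e2 : Tder L k μs (fun t => As (Equiv.swap i j t))
      = Tder L k (fun s => μs (Equiv.swap i j s)) As := by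
    rw [← e]
    congr 1
    funext t
    simp
  rw [e2]
  exact Tder_swap_mu hL hsym μs As hij

lemma sign_from_swaps {α β : Type*} [DecidableEq α] [Fintype α] (F : (α → β) → ℝ)
    (hswap : ∀ (g : α → β) (i j : α), i ≠ j → F (fun t => g (Equiv.swap i j t)) = - F g)
    (P : Equiv.Perm α) (g : α → β) :
    F (fun t => g (P t)) = ((Equiv.Perm.sign P : ℤ) : ℝ) * F g := by
  revert g
  refine Equiv.Perm.swap_induction_on P ?_ ?_
  · intro g; simp
  · intro f x y hxy ih g
    have h1 : (fun t => g ((Equiv.swap x y * f) t))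
        = fun t => (fun s => g (Equiv.swap x y s)) (f t) := rfl
    rw [h1, ih (fun s => g (Equiv.swap x y s)), hswap g x y hxy, Equiv.Perm.sign_mul, Equiv.Perm.sign_swap hxy]
    push_cast
    ring

lemma Dd_apply_sum {ι : Type*} (s : Finset ι) (r : ι → ℝ) (e : ι → Conf1 n N)
    (f : Conf1 n N → ℝ) (p : Conf1 n N) :
    Dd (∑ j ∈ s, r j • e j) f p = ∑ j ∈ s, r j * Dd (e j) f p := by
  show fderiv ℝ f p (∑ j ∈ s, r j • e j) = _
  rw [map_sum]
  refine Finset.sum_congr rfl fun j _ => ?_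
  rw [map_smul]
  rfl

lemma Dd_sum_mul {ι : Type*} (s : Finset ι) (cst : ι → ℝ) (g : ι → Conf1 n N → ℝ)
    (hg : ∀ a ∈ s, Differentiable ℝ (g a)) (d : Conf1 n N) (p : Conf1 n N) :
    Dd d (fun q => ∑ a ∈ s, cst a * g a q) p = ∑ a ∈ s, cst a * Dd d (g a) p := by
  show fderiv ℝ (fun q => ∑ a ∈ s, cst a * g a q) p d = _
  rw [fderiv_fun_sum fun a ha => ((hg a ha) p).const_mul (cst a)]
  rw [ContinuousLinearMap.sum_apply]
  refine Finset.sum_congr rfl fun a ha => ?_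
  rw [fderiv_const_mul ((hg a ha) p) (cst a)]
  rfl

lemma DdL_replicate_expand {ι : Type*} [Fintype ι] (e : ι → Conf1 n N) (r : ι → ℝ)
    (f : Conf1 n N → ℝ) (hf : ContDiff ℝ (⊤ : ℕ∞) f) (k : ℕ) (p : Conf1 n N) :
    DdL (List.replicate k (∑ j : ι, r j • e j)) f p
      = ∑ F : Fin k → ι, (∏ i, r (F i)) * DdL (List.ofFn fun i => e (F i)) f p := by
  induction k generalizing p with
  | zero => simp [TFOP.DdL]
  | succ k ih =>
    show Dd (∑ j : ι, r j • e j) (DdL (List.replicate k (∑ j : ι, r j • e j)) f) p = _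
    have hfun : DdL (List.replicate k (∑ j : ι, r j • e j)) f
        = fun q => ∑ F : Fin k → ι,
            (∏ i, r (F i)) * DdL (List.ofFn fun i => e (F i)) f q := by
      funext q; exact ih q
    rw [hfun, Dd_apply_sum]
    have step : ∀ j : ι,
        Dd (e j) (fun q => ∑ F : Fin k → ι,
            (∏ i, r (F i)) * DdL (List.ofFn fun i => e (F i)) f q) p
        = ∑ F : Fin k → ι,
            (∏ i, r (F i)) * Dd (e j) (DdL (List.ofFn fun i => e (F i)) f) p := by
      intro j
      exact Dd_sum_mul Finset.univ _ _
        (fun F _ => (contDiff_DdL hf _).differentiable (by simp)) (e j) p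
    rw [show (∑ j : ι, r j * Dd (e j) (fun q => ∑ F : Fin k → ι,
            (∏ i, r (F i)) * DdL (List.ofFn fun i => e (F i)) f q) p)
        = ∑ j : ι, r j * ∑ F : Fin k → ι,
            (∏ i, r (F i)) * Dd (e j) (DdL (List.ofFn fun i => e (F i)) f) p from
      Finset.sum_congr rfl fun j _ => by rw [step j]]
    rw [← Equiv.sum_comp (Fin.consEquiv fun _ => ι)
      (fun F : Fin (k+1) → ι =>
        (∏ i, r (F i)) * DdL (List.ofFn fun i => e (F i)) f p), Fintype.sum_prod_type]
    refine Finset.sum_congr rfl fun j _ => ?_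
    rw [Finset.mul_sum]
    refine Finset.sum_congr rfl fun F _ => ?_
    have hprod : (∏ i : Fin (k+1), r ((Fin.cons j F : Fin (k+1) → ι) i))
        = r j * ∏ i : Fin k, r (F i) := by
      rw [Fin.prod_univ_succ]; simp
    have hof : (List.ofFn fun i : Fin (k+1) => e ((Fin.cons j F : Fin (k+1) → ι) i))
        = e j :: List.ofFn fun i : Fin k => e (F i) := by
      rw [List.ofFn_succ]; simp
    show r j * ((∏ i, r (F i)) * Dd (e j) (DdL (List.ofFn fun i => e (F i)) f) p)
        = (∏ i : Fin (k+1), r ((Fin.consEquiv fun _ => ι) (j, F) i))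
        * DdL (List.ofFn fun i => e ((Fin.consEquiv fun _ => ι) (j, F) i)) f p
    have hc : ((Fin.consEquiv fun _ => ι) (j, F) : Fin (k+1) → ι)
        = (Fin.cons j F : Fin (k+1) → ι) := rfl
    rw [hc, hprod, hof]
    rw [mul_assoc]
    rfl

lemma sum_velDir (v : Fin N → Fin n → ℝ) :
    ∑ j : Fin N × Fin n, v j.1 j.2 • velDir n N j.1 j.2 = ((0, 0, v) : Conf1 n N) := by
  refine Prod.ext ?_ (Prod.ext ?_ ?_)
  · rw [Prod.fst_sum]
    simp [velDir]
  · rw [Prod.snd_sum, Prod.fst_sum]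
    simp [velDir]
  · rw [Prod.snd_sum, Prod.snd_sum]
    funext B ν
    rw [Finset.sum_apply, Finset.sum_apply]
    rw [Finset.sum_eq_single (B, ν)]
    · simp [velDir]
    · intro j _ hj
      have hcond : ¬(B = j.1 ∧ ν = j.2) := by
        rintro ⟨h1, h2⟩
        exact hj (Prod.ext_iff.mpr ⟨h1.symm, h2.symm⟩)
      simp [velDir, hcond]
    · intro hmem
      exact absurd (Finset.mem_univ _) hmem

lemma Tder_vanish (hL : ContDiff ℝ (⊤ : ℕ∞) L)
    (hsym : ∀ (p : Conf1 n N) (A B : Fin N) (μ ν : Fin n),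
      fderiv ℝ (fun q => fderiv ℝ L q (velDir n N A μ)) p (velDir n N B ν) +
        fderiv ℝ (fun q => fderiv ℝ L q (velDir n N A ν)) p (velDir n N B μ) = 0)
    (F : Fin (n+1) → Fin N × Fin n) :
    Tder L (n+1) (fun i => (F i).2) (fun i => (F i).1) = 0 := by
  obtain ⟨i, j, hij, hFij⟩ := Fintype.exists_ne_map_eq_of_card_lt (fun i => (F i).2)
    (by simpa using Nat.lt_succ_self n)
  have heq : (fun t => (F (Equiv.swap i j t)).2) = fun t => (F t).2 := by
    funext t
    rcases eq_or_ne t i with rfl | hti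
    · rw [Equiv.swap_apply_left]; exact hFij.symm
    rcases eq_or_ne t j with rfl | htj
    · rw [Equiv.swap_apply_right]; exact hFij
    · rw [Equiv.swap_apply_of_ne_of_ne hti htj]
  have h := Tder_swap_mu hL hsym (fun i => (F i).2) (fun i => (F i).1) hij
  rw [heq] at h
  funext p
  have hp := congrFun h p
  rw [Pi.neg_apply] at hp
  rw [Pi.zero_apply]
  linarith

lemma iterDW_eq (h : ℝ → ℝ) (hh : ContDiff ℝ (⊤ : ℕ∞) h) {s : Set ℝ} (hs : UniqueDiffOn ℝ s)
    (k : ℕ) : ∀ x ∈ s, iteratedDerivWithin k h s x = iteratedDeriv k h x := by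
  induction k with
  | zero => intro x hx; simp
  | succ k ih =>
    intro x hx
    rw [iteratedDerivWithin_succ, iteratedDeriv_succ]
    rw [derivWithin_congr (fun y hy => ih y hy) (ih x hx)]
    exact ((hh.differentiable_iteratedDeriv k
      (by exact_mod_cast ENat.coe_lt_top k)).differentiableAt).derivWithin (hs x hx)

end Main

open TFOP in
/-- A smooth first-order Lagrangian `L(x, ψ, ψ_μ)` satisfying
`(∂^μ_A ∂^ν_B + ∂^ν_A ∂^μ_B) L = 0` is a polynomial of degree at most `n` in
the first derivatives:
`L = Σ_{k=0}^n (1/k!) L^{μ_1…μ_k}_{A_1…A_k}(x,ψ) ∏_i ψ^{A_i}_{μ_i}`,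
with coefficients smooth in `(x,ψ)`, completely antisymmetric in the upper
indices `μ_1,…,μ_k` and in the lower indices `A_1,…,A_k`. -/
theorem trivial_first_order_polynomial (n N : ℕ) (hn : 1 ≤ n) (hN : 1 ≤ N)
    (L : Conf1 n N → ℝ) (hL : ContDiff ℝ (⊤ : ℕ∞) L)
    (hsym : ∀ (p : Conf1 n N) (A B : Fin N) (μ ν : Fin n),
      fderiv ℝ (fun q => fderiv ℝ L q (velDir n N A μ)) p (velDir n N B ν) +
        fderiv ℝ (fun q => fderiv ℝ L q (velDir n N A ν)) p (velDir n N B μ) = 0) :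
    ∃ c : (k : Fin (n + 1)) → (Fin k.val → Fin n) → (Fin k.val → Fin N) →
        (Fin n → ℝ) → (Fin N → ℝ) → ℝ,
      (∀ k μs As, ContDiff ℝ (⊤ : ℕ∞)
        (fun z : (Fin n → ℝ) × (Fin N → ℝ) => c k μs As z.1 z.2)) ∧
      (∀ k μs As (P : Equiv.Perm (Fin k.val)) x u,
        c k (μs ∘ P) As x u = ((Equiv.Perm.sign P : ℤ) : ℝ) * c k μs As x u) ∧
      (∀ k μs As (P : Equiv.Perm (Fin k.val)) x u,
        c k μs (As ∘ P) x u = ((Equiv.Perm.sign P : ℤ) : ℝ) * c k μs As x u) ∧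
      (∀ x u v, L (x, u, v) =
        ∑ k : Fin (n + 1), ((k.val.factorial : ℝ))⁻¹ *
          ∑ μs : Fin k.val → Fin n, ∑ As : Fin k.val → Fin N,
            c k μs As x u * ∏ i, v (As i) (μs i)) := by
  classical
  refine ⟨fun k μs As x u => Tder L k.val μs As ((x, u, 0) : Conf1 n N), ?_, ?_, ?_, ?_⟩
  · -- smoothness of the coefficients
    intro k μs As
    have h1 : ContDiff ℝ (⊤ : ℕ∞) (fun z : (Fin n → ℝ) × (Fin N → ℝ) => ((z.1, z.2, 0) : Conf1 n N)) :=
      contDiff_fst.prodMk (contDiff_snd.prodMk contDiff_const)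
    exact (contDiff_DdL hL _).comp h1
  · -- antisymmetry in the upper indices
    intro k μs As P x u
    exact sign_from_swaps (fun g => Tder L k.val g As ((x, u, 0) : Conf1 n N))
      (fun g i j hij => by
        have := congrFun (Tder_swap_mu hL hsym g As hij) (((x, u, 0)) : Conf1 n N)
        simpa using this) P μs
  · -- antisymmetry in the lower indices
    intro k μs As P x u
    exact sign_from_swaps (fun g => Tder L k.val μs g ((x, u, 0) : Conf1 n N))
      (fun g i j hij => by
        have := congrFun (Tder_swap_A hL hsym μs g hij) (((x, u, 0)) : Conf1 n N)
        simpa using this) P As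
  · -- the polynomial expansion
    intro x u v
    set w : Conf1 n N := ((0, 0, v) : Conf1 n N) with hw
    set ι : ℝ → Conf1 n N := fun t => ((x, u, 0) : Conf1 n N) + t • w with hι
    set h : ℝ → ℝ := fun t => L (ι t) with hh
    have hιc : ContDiff ℝ (⊤ : ℕ∞) ι := contDiff_const.add (contDiff_id.smul contDiff_const)
    have hhc : ContDiff ℝ (⊤ : ℕ∞) h := hL.comp hιc
    have hG : ∀ k : ℕ, ContDiff ℝ (⊤ : ℕ∞) (DdL (List.replicate k w) L) :=
      fun k => contDiff_DdL hL _
    have hder : ∀ (k : ℕ) (t : ℝ),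
        iteratedDeriv k h t = DdL (List.replicate k w) L (ι t) := by
      intro k
      induction k with
      | zero => intro t; simp [iteratedDeriv_zero]; rfl
      | succ k ih =>
        intro t
        rw [iteratedDeriv_succ]
        have e1 : deriv (iteratedDeriv k h) t
            = deriv (fun s => DdL (List.replicate k w) L (ι s)) t := by
          congr 1; funext s; exact ih s
        rw [e1]
        have hι' : HasDerivAt ι w t := by
          have h1 : HasDerivAt (fun s : ℝ => s • w) ((1:ℝ) • w) t :=
            (hasDerivAt_id t).smul_const w
          have h2 := h1.const_add (((x, u, 0)) : Conf1 n N)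
          simpa [hι] using h2
        have h2 : HasFDerivAt (DdL (List.replicate k w) L)
            (fderiv ℝ (DdL (List.replicate k w) L) (ι t)) (ι t) :=
          (((hG k).differentiable (by simp)) (ι t)).hasFDerivAt
        have h3 := h2.comp_hasDerivAt t hι'
        have h4 : HasDerivAt (fun s => DdL (List.replicate k w) L (ι s))
            (fderiv ℝ (DdL (List.replicate k w) L) (ι t) w) t := h3
        rw [h4.deriv]
        rfl
    have hvanish : ∀ p : Conf1 n N, DdL (List.replicate (n+1) w) L p = 0 := by
      intro p
      have hexp := DdL_replicate_expand (fun j : Fin N × Fin n => velDir n N j.1 j.2)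
        (fun j => v j.1 j.2) L hL (n+1) p
      rw [sum_velDir v, ← hw] at hexp
      rw [hexp]
      refine Finset.sum_eq_zero fun F _ => ?_
      have h0 := Tder_vanish hL hsym F
      have h1 : DdL (List.ofFn fun i => velDir n N (F i).1 (F i).2) L p = 0 := by
        have := congrFun h0 p
        simpa [Tder] using this
      rw [h1, mul_zero]
    have hk' : ∀ k : ℕ, DdL (List.replicate k w) L (((x, u, 0)) : Conf1 n N)
        = ∑ μs : Fin k → Fin n, ∑ As : Fin k → Fin N,
            Tder L k μs As (((x, u, 0)) : Conf1 n N) * ∏ i, v (As i) (μs i) := by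
      intro k
      have hexp := DdL_replicate_expand (fun j : Fin N × Fin n => velDir n N j.1 j.2)
        (fun j => v j.1 j.2) L hL k (((x, u, 0)) : Conf1 n N)
      rw [sum_velDir v, ← hw] at hexp
      rw [hexp]
      rw [← Equiv.sum_comp (Equiv.arrowProdEquivProdArrow (Fin k) (fun _ => Fin N) (fun _ => Fin n)).symm
        (fun F : Fin k → Fin N × Fin n => (∏ i, v (F i).1 (F i).2)
          * DdL (List.ofFn fun i => velDir n N (F i).1 (F i).2) L (((x, u, 0)) : Conf1 n N)),
        Fintype.sum_prod_type]
      rw [Finset.sum_comm]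
      refine Finset.sum_congr rfl fun μs _ => Finset.sum_congr rfl fun As _ => ?_
      show (∏ i, v (As i) (μs i))
          * DdL (List.ofFn fun i => velDir n N (As i) (μs i)) L (((x, u, 0)) : Conf1 n N) = _
      rw [mul_comm]
      rfl
    -- Taylor's theorem with Lagrange remainder on [0, 1]
    have hIcc : UniqueDiffOn ℝ (Set.Icc (0:ℝ) 1) := uniqueDiffOn_Icc (by norm_num)
    have hcont : ContDiffOn ℝ (n : WithTop ℕ∞) h (Set.Icc (0:ℝ) 1) :=
      (hhc.of_le (by exact_mod_cast le_top)).contDiffOn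
    have hdiffOn : DifferentiableOn ℝ (iteratedDerivWithin n h (Set.Icc (0:ℝ) 1))
        (Set.Ioo (0:ℝ) 1) := by
      refine DifferentiableOn.congr
        ((hhc.differentiable_iteratedDeriv n
          (by exact_mod_cast ENat.coe_lt_top n)).differentiableOn) ?_
      intro y hy
      exact iterDW_eq h hhc hIcc n y (Set.mem_Icc_of_Ioo hy)
    obtain ⟨y, hy, hTaylor⟩ := taylor_mean_remainder_lagrange (x₀ := 0) (x := 1)
      (by norm_num) (by rw [Set.uIcc_of_le zero_le_one]; exact hcont)
      (by rw [Set.uIcc_of_le zero_le_one, Set.uIoo_of_le zero_le_one]; exact hdiffOn)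
    rw [Set.uIcc_of_le zero_le_one] at hTaylor
    rw [Set.uIoo_of_le zero_le_one] at hy
    have hzero : iteratedDerivWithin (n+1) h (Set.Icc (0:ℝ) 1) y = 0 := by
      rw [iterDW_eq h hhc hIcc (n+1) y (Set.mem_Icc_of_Ioo hy), hder (n+1) y]
      exact hvanish _
    rw [hzero] at hTaylor
    have hι1 : ι 1 = ((x, u, v) : Conf1 n N) := by
      rw [hι]
      show ((x, u, 0) : Conf1 n N) + (1:ℝ) • w = _
      rw [one_smul, hw]
      show ((x + 0, u + 0, (0:Fin N → Fin n → ℝ) + v) : Conf1 n N) = _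
      simp
    have hval : L (x, u, v) = taylorWithinEval h n (Set.Icc (0:ℝ) 1) 0 1 := by
      have h1 : h 1 = L (x, u, v) := by rw [hh]; show L (ι 1) = _; rw [hι1]
      have h2 : h 1 - taylorWithinEval h n (Set.Icc (0:ℝ) 1) 0 1 = 0 := by
        rw [hTaylor]; ring
      linarith
    rw [hval, taylor_within_apply]
    have hι0 : ι 0 = ((x, u, 0) : Conf1 n N) := by
      rw [hι]; show ((x, u, 0) : Conf1 n N) + (0:ℝ) • w = _; rw [zero_smul, add_zero]
    have hterm : ∀ k : ℕ, iteratedDerivWithin k h (Set.Icc (0:ℝ) 1) 0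
        = ∑ μs : Fin k → Fin n, ∑ As : Fin k → Fin N,
            Tder L k μs As (((x, u, 0)) : Conf1 n N) * ∏ i, v (As i) (μs i) := by
      intro k
      rw [iterDW_eq h hhc hIcc k 0 (by norm_num : (0:ℝ) ∈ Set.Icc (0:ℝ) 1), hder k 0, hι0]
      exact hk' k
    rw [Fin.sum_univ_eq_sum_range (fun k : ℕ => ((k.factorial : ℝ))⁻¹ *
      ∑ μs : Fin k → Fin n, ∑ As : Fin k → Fin N,
        Tder L k μs As (((x, u, 0)) : Conf1 n N) * ∏ i, v (As i) (μs i)) (n+1)]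
    refine Finset.sum_congr rfl fun k _ => ?_
    rw [hterm k]
    simp [smul_eq_mul]
end

section
/- For a second-order Lagrangian L(x, ψ^A, ψ^A_ν, ψ^A_{νρ}), the triviality condition ∂_A L − D_μ ∂^μ_A L + D_μ D_ν ∂^{μν}_A L = 0 (as an identity in the fourth-order jet variables) implies the symmetrized second-derivative condition: Σ_{cyclic (ρ_1,ρ_2,ρ_3)} ∂^{μρ_1}_A ∂^{ρ_2ρ_3}_B L + (A ↔ B) = 0 for all indices μ, ρ_1, ρ_2, ρ_3, A, B. -/
open scoped BigOperators

/-- A jet multi-index of order at most `r`: a pair of an order `k ≤ r` and an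
unordered multi-index `I ∈ Sym (Fin n) k` (multiset of `k` spacetime indices). -/
def JetIdx (n r : ℕ) := Σ k : Fin (r + 1), Sym (Fin n) k.val

instance (n r : ℕ) : Fintype (JetIdx n r) := by unfold JetIdx; infer_instance
instance (n r : ℕ) : DecidableEq (JetIdx n r) := by unfold JetIdx; infer_instance

/-- The `r`-th order jet space: coordinates `(x^μ, ψ^A_I)` with `|I| ≤ r`. -/
def JetSpace (n N r : ℕ) := (Fin n → ℝ) × (Fin N → JetIdx n r → ℝ)

noncomputable instance (n N r : ℕ) : NormedAddCommGroup (JetSpace n N r) := by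
  unfold JetSpace; infer_instance
noncomputable instance (n N r : ℕ) : NormedSpace ℝ (JetSpace n N r) := by
  unfold JetSpace; infer_instance

/-- The coordinate direction `∂/∂x^μ`. -/
noncomputable def xDir (n N r : ℕ) (μ : Fin n) : JetSpace n N r :=
  (Pi.single μ 1, 0)

/-- The coordinate direction `∂/∂ψ^A_I`. -/
def jetDir (n N r : ℕ) (A : Fin N) (s : JetIdx n r) : JetSpace n N r :=
  (0, fun A' s' => if A' = A ∧ s' = s then 1 else 0)

/-- The (truncated) total derivative
`D_μ f = ∂f/∂x^μ + Σ_{A} Σ_{|I| ≤ r−1} ψ^A_{Iμ} ∂f/∂ψ^A_I`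
(in multiset jet coordinates, where the normalized partial derivative `∂^I_A`
is the plain coordinate derivative). -/
noncomputable def Dtot (n N r : ℕ) (μ : Fin n) (f : JetSpace n N r → ℝ)
    (p : JetSpace n N r) : ℝ :=
  fderiv ℝ f p (xDir n N r μ) +
    ∑ A : Fin N, ∑ s : JetIdx n r,
      if h : s.1.val < r then
        p.2 A ⟨⟨s.1.val + 1, by omega⟩, Sym.cons μ s.2⟩ *
          fderiv ℝ f p (jetDir n N r A s)
      else 0

/-- The jet multi-index of order `0`. -/
def idx0 (n r : ℕ) (h : 0 < r + 1) : JetIdx n r := ⟨⟨0, h⟩, Sym.nil⟩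

/-- The jet multi-index `{μ}` of order `1`. -/
def idx1 (n r : ℕ) (h : 1 < r + 1) (μ : Fin n) : JetIdx n r :=
  ⟨⟨1, h⟩, Sym.cons μ Sym.nil⟩

/-- The jet multi-index `{μ, ν}` of order `2`. -/
def idx2 (n r : ℕ) (h : 2 < r + 1) (μ ν : Fin n) : JetIdx n r :=
  ⟨⟨2, h⟩, Sym.cons μ (Sym.cons ν Sym.nil)⟩

/-- The normalized partial derivative `∂^{μν}_A` with respect to the
second-order jet variable `ψ^A_{μν}` (factor `1/2` for `μ ≠ ν`). -/
noncomputable def pd2 (n N : ℕ) (A : Fin N) (μ ν : Fin n)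
    (f : JetSpace n N 4 → ℝ) : JetSpace n N 4 → ℝ :=
  fun p => (if μ = ν then (1 : ℝ) else 1 / 2) *
    fderiv ℝ f p (jetDir n N 4 A (idx2 n 4 (by omega) μ ν))



section Aux
variable {n N : ℕ}

noncomputable def coordCLM (C : Fin N) (s : JetIdx n 4) : JetSpace n N 4 →L[ℝ] ℝ :=
  (ContinuousLinearMap.proj s).comp ((ContinuousLinearMap.proj C).comp
    (ContinuousLinearMap.snd ℝ (Fin n → ℝ) (Fin N → JetIdx n 4 → ℝ)))

lemma coordCLM_apply (C : Fin N) (s : JetIdx n 4) (q : JetSpace n N 4) :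
    coordCLM C s q = q.2 C s := rfl

lemma jetDir_snd (A : Fin N) (s : JetIdx n 4) (C : Fin N) (t : JetIdx n 4) :
    (jetDir n N 4 A s).2 C t = if C = A ∧ t = s then 1 else 0 := rfl

lemma fderiv_coord (C : Fin N) (s : JetIdx n 4) (p v : JetSpace n N 4) :
    fderiv ℝ (fun q : JetSpace n N 4 => q.2 C s) p v = v.2 C s := by
  have : (fun q : JetSpace n N 4 => q.2 C s) = ⇑(coordCLM C s) := rfl
  rw [this, ContinuousLinearMap.fderiv]
  rfl

lemma contDiff_coord (C : Fin N) (s : JetIdx n 4) :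
    ContDiff ℝ (⊤ : ℕ∞) (fun q : JetSpace n N 4 => q.2 C s) :=
  (coordCLM C s).contDiff

lemma contDiff_fderiv_apply {f : JetSpace n N 4 → ℝ} (hf : ContDiff ℝ (⊤ : ℕ∞) f)
    (w : JetSpace n N 4) : ContDiff ℝ (⊤ : ℕ∞) (fun q => fderiv ℝ f q w) :=
  (hf.fderiv_right (by simp)).clm_apply contDiff_const

lemma fderiv_fderiv_apply {f : JetSpace n N 4 → ℝ} (hf : ContDiff ℝ (⊤ : ℕ∞) f)
    (w p : JetSpace n N 4) :
    fderiv ℝ (fun q => fderiv ℝ f q w) p = (fderiv ℝ (fderiv ℝ f) p).flip w := by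
  have hdf : ContDiff ℝ (⊤ : ℕ∞) (fderiv ℝ f) := hf.fderiv_right (by simp)
  rw [show (fun q => fderiv ℝ f q w) = (fun q => (fderiv ℝ f q) ((fun _ => w) q)) from rfl,
    fderiv_clm_apply (hdf.differentiable (by simp) p) (differentiableAt_const w)]
  simp

lemma key0 {f : JetSpace n N 4 → ℝ} (hf : ContDiff ℝ (⊤ : ℕ∞) f) {v : JetSpace n N 4}
    (hv : ∀ q, fderiv ℝ f q v = 0) (w p : JetSpace n N 4) :
    fderiv ℝ (fun q => fderiv ℝ f q w) p v = 0 := by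
  have hdf : ContDiff ℝ (⊤ : ℕ∞) (fderiv ℝ f) := hf.fderiv_right (by simp)
  have hsymm : ∀ a b : JetSpace n N 4,
      fderiv ℝ (fderiv ℝ f) p a b = fderiv ℝ (fderiv ℝ f) p b a :=
    second_derivative_symmetric (fun y => (hf.differentiable (by simp) y).hasFDerivAt)
      ((hdf.differentiable (by simp) p).hasFDerivAt)
  rw [fderiv_fderiv_apply hf]
  show fderiv ℝ (fderiv ℝ f) p v w = 0
  rw [hsymm v w]
  have : fderiv ℝ (fun q => fderiv ℝ f q v) p w = fderiv ℝ (fderiv ℝ f) p w v := by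
    rw [fderiv_fderiv_apply hf]; rfl
  rw [← this]
  have h0 : (fun q => fderiv ℝ f q v) = fun _ => (0 : ℝ) := funext hv
  rw [h0, fderiv_fun_const]
  rfl

end Aux

section Aux2
variable {n N : ℕ} {L : JetSpace n N 4 → ℝ}

lemma fderiv_high (hL : ContDiff ℝ (⊤ : ℕ∞) L)
    (hord : ∀ (p q : JetSpace n N 4), p.1 = q.1 →
      (∀ A s, s.1.val ≤ 2 → p.2 A s = q.2 A s) → L p = L q)
    (C : Fin N) (s : JetIdx n 4) (hs : 3 ≤ s.1.val) (q : JetSpace n N 4) :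
    fderiv ℝ L q (jetDir n N 4 C s) = 0 := by
  have hconst : (fun t : ℝ => L (q + t • jetDir n N 4 C s)) = fun _ => L q := by
    funext t
    apply hord
    · show q.1 + t • (0 : Fin n → ℝ) = q.1
      simp
    · intro A' s' hs'
      show q.2 A' s' + t * (if A' = C ∧ s' = s then (1:ℝ) else 0) = q.2 A' s'
      have : ¬ (A' = C ∧ s' = s) := by
        rintro ⟨-, rfl⟩; omega
      rw [if_neg this]; ring
  have := (hL.differentiable (by simp) q).lineDeriv_eq_fderiv (v := jetDir n N 4 C s)
  rw [← this]
  unfold lineDeriv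
  rw [hconst]
  simp

end Aux2

section Aux3
variable {n N : ℕ}

lemma contDiff_Dtot {f : JetSpace n N 4 → ℝ} (hf : ContDiff ℝ (⊤ : ℕ∞) f) (ν : Fin n) :
    ContDiff ℝ (⊤ : ℕ∞) (Dtot n N 4 ν f) := by
  unfold Dtot
  apply ContDiff.add
  · exact contDiff_fderiv_apply hf _
  · apply ContDiff.sum; intro C _
    apply ContDiff.sum; intro s _
    by_cases h : s.1.val < 4
    · simp only [dif_pos h]
      exact (contDiff_coord C _).mul (contDiff_fderiv_apply hf _)
    · simp only [dif_neg h]; exact contDiff_const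

lemma Dtot_fderiv {g : JetSpace n N 4 → ℝ} (hg : ContDiff ℝ (⊤ : ℕ∞) g)
    {v : JetSpace n N 4} (hv : ∀ q, fderiv ℝ g q v = 0) (ν : Fin n) (p : JetSpace n N 4) :
    fderiv ℝ (Dtot n N 4 ν g) p v =
      ∑ C : Fin N, ∑ s : JetIdx n 4,
        if h : s.1.val < 4 then
          v.2 C ⟨⟨s.1.val + 1, by omega⟩, Sym.cons ν s.2⟩ * fderiv ℝ g p (jetDir n N 4 C s)
        else 0 := by
  have hd1 : DifferentiableAt ℝ (fun q => fderiv ℝ g q (xDir n N 4 ν)) p :=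
    ((contDiff_fderiv_apply hg _).differentiable (by simp) p)
  have hsummand : ∀ (C : Fin N) (s : JetIdx n 4) (q0 : JetSpace n N 4),
      DifferentiableAt ℝ (fun q : JetSpace n N 4 =>
        if h : s.1.val < 4 then
          q.2 C ⟨⟨s.1.val + 1, by omega⟩, Sym.cons ν s.2⟩ * fderiv ℝ g q (jetDir n N 4 C s)
        else 0) q0 := by
    intro C s q0
    by_cases h : s.1.val < 4
    · simp only [dif_pos h]
      exact (((contDiff_coord C _).mul (contDiff_fderiv_apply hg _)).differentiable (by simp) q0)
    · simp only [dif_neg h]; exact differentiableAt_const 0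
  have hd2 : ∀ (C : Fin N) (q0 : JetSpace n N 4), DifferentiableAt ℝ
      (fun q : JetSpace n N 4 => ∑ s : JetIdx n 4,
        if h : s.1.val < 4 then
          q.2 C ⟨⟨s.1.val + 1, by omega⟩, Sym.cons ν s.2⟩ * fderiv ℝ g q (jetDir n N 4 C s)
        else 0) q0 := by
    intro C q0
    exact DifferentiableAt.fun_sum (fun s _ => hsummand C s q0)
  unfold Dtot
  rw [fderiv_fun_add hd1 (DifferentiableAt.fun_sum (fun C _ => hd2 C p)),
    ContinuousLinearMap.add_apply, key0 hg hv _ p, zero_add,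
    fderiv_fun_sum (fun C _ => hd2 C p), ContinuousLinearMap.sum_apply]
  apply Finset.sum_congr rfl
  intro C _
  rw [fderiv_fun_sum (fun s _ => hsummand C s p), ContinuousLinearMap.sum_apply]
  apply Finset.sum_congr rfl
  intro s _
  by_cases h : s.1.val < 4
  · simp only [dif_pos h]
    erw [fderiv_fun_mul ((contDiff_coord C _).differentiable (by simp) p)
      ((contDiff_fderiv_apply hg _).differentiable (by simp) p)]
    simp only [ContinuousLinearMap.add_apply, ContinuousLinearMap.smul_apply]
    rw [key0 hg hv _ p]; erw [fderiv_coord]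
    simp [mul_comm]
  · simp only [dif_neg h]
    rw [fderiv_fun_const]
    rfl

end Aux3

section Aux4
variable {n N : ℕ}

lemma jetIdx_eq {k k' : Fin 5} {m : Sym (Fin n) k.val} {m' : Sym (Fin n) k'.val}
    (h1 : k.val = k'.val) (h2 : (m : Multiset (Fin n)) = (m' : Multiset (Fin n))) :
    (⟨k, m⟩ : JetIdx n 4) = ⟨k', m'⟩ := by
  have hk : k = k' := Fin.ext h1
  subst hk
  have : m = m' := Sym.coe_injective h2
  rw [this]

lemma jetIdx_fst_val {t t' : JetIdx n 4} (h : t = t') : t.1.val = t'.1.val := by rw [h]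

lemma jetIdx_snd_val {t t' : JetIdx n 4} (h : t = t') :
    (t.2 : Multiset (Fin n)) = (t'.2 : Multiset (Fin n)) := by rw [h]

lemma sum_pick (B : Fin N) (t : JetIdx n 4) (k : ℕ) (hk : t.1.val = k + 1) (ν : Fin n)
    (F : Fin N → JetIdx n 4 → ℝ) :
    (∑ C : Fin N, ∑ s : JetIdx n 4,
      if h : s.1.val < 4 then
        (jetDir n N 4 B t).2 C ⟨⟨s.1.val + 1, by omega⟩, Sym.cons ν s.2⟩ * F C s
      else 0) =
    if hν : ν ∈ (t.2 : Multiset (Fin n)) then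
      F B ⟨⟨k, by omega⟩, ⟨(t.2 : Multiset (Fin n)).erase ν, by
        show Multiset.card ((t.2 : Multiset (Fin n)).erase ν) = k
        have hc : Multiset.card (t.2 : Multiset (Fin n)) = t.1.val := t.2.prop
        rw [Multiset.card_erase_of_mem hν, Nat.pred_eq_sub_one]; omega⟩⟩
    else 0 := by
  have hcard : Multiset.card (t.2 : Multiset (Fin n)) = t.1.val := t.2.prop
  by_cases hν : ν ∈ (t.2 : Multiset (Fin n))
  · rw [dif_pos hν]
    set s0 : JetIdx n 4 := ⟨⟨k, by omega⟩, ⟨(t.2 : Multiset (Fin n)).erase ν, by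
        show Multiset.card ((t.2 : Multiset (Fin n)).erase ν) = k
        rw [Multiset.card_erase_of_mem hν, Nat.pred_eq_sub_one]; omega⟩⟩ with hs0
    have hpt : ∀ (C : Fin N) (s : JetIdx n 4),
        (if h : s.1.val < 4 then
          (jetDir n N 4 B t).2 C ⟨⟨s.1.val + 1, by omega⟩, Sym.cons ν s.2⟩ * F C s
        else 0) = if C = B then (if s = s0 then F C s else 0) else 0 := by
      intro C s
      by_cases hCB : C = B
      · by_cases hss : s = s0
        · subst hss; subst hCB
          have h4 : s0.1.val < 4 := by simp only [hs0]; omega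
          rw [dif_pos h4]; erw [jetDir_snd]; rw [if_pos, if_pos rfl, if_pos rfl, one_mul]
          refine ⟨rfl, jetIdx_eq ?_ ?_⟩
          · simp only [hs0]; omega
          · rw [Sym.coe_cons]
            show ν ::ₘ (t.2 : Multiset (Fin n)).erase ν = (t.2 : Multiset (Fin n))
            exact Multiset.cons_erase hν
        · rw [if_pos hCB, if_neg hss]
          by_cases h4 : s.1.val < 4
          · rw [dif_pos h4]; erw [jetDir_snd]; rw [if_neg, zero_mul]
            rintro ⟨-, heq⟩
            apply hss
            have h1 := jetIdx_fst_val heq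
            have h2 := jetIdx_snd_val heq
            simp only at h1
            rw [Sym.coe_cons] at h2
            have hsv : (s.2 : Multiset (Fin n)) = (t.2 : Multiset (Fin n)).erase ν := by
              rw [← h2, Multiset.erase_cons_head]
            refine jetIdx_eq ?_ ?_
            · simp only [hs0]; omega
            · exact hsv
          · rw [dif_neg h4]
      · rw [if_neg hCB]
        by_cases h4 : s.1.val < 4
        · rw [dif_pos h4]; erw [jetDir_snd]; rw [if_neg, zero_mul]
          rintro ⟨hcb, -⟩; exact hCB hcb
        · rw [dif_neg h4]
    calc (∑ C : Fin N, ∑ s : JetIdx n 4,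
        if h : s.1.val < 4 then
          (jetDir n N 4 B t).2 C ⟨⟨s.1.val + 1, by omega⟩, Sym.cons ν s.2⟩ * F C s
        else 0)
        = ∑ C : Fin N, ∑ s : JetIdx n 4,
            if C = B then (if s = s0 then F C s else 0) else 0 := by
          apply Finset.sum_congr rfl; intro C _
          apply Finset.sum_congr rfl; intro s _
          exact hpt C s
      _ = F B s0 := by
          rw [Finset.sum_comm]
          rw [show (∑ s : JetIdx n 4, ∑ C : Fin N,
              if C = B then (if s = s0 then F C s else 0) else 0)
            = ∑ s : JetIdx n 4, (if s = s0 then F B s else 0) from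
            Finset.sum_congr rfl fun s _ => by
              rw [Finset.sum_ite_eq' Finset.univ B (fun C => if s = s0 then F C s else 0),
                if_pos (Finset.mem_univ B)]]
          rw [Finset.sum_ite_eq' Finset.univ s0 (fun s => F B s), if_pos (Finset.mem_univ s0)]
  · rw [dif_neg hν]
    apply Finset.sum_eq_zero; intro C _
    apply Finset.sum_eq_zero; intro s _
    by_cases h4 : s.1.val < 4
    · rw [dif_pos h4]; erw [jetDir_snd]; rw [if_neg, zero_mul]
      rintro ⟨-, heq⟩
      apply hν
      have h2 := jetIdx_snd_val heq
      rw [Sym.coe_cons] at h2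
      rw [← h2]
      exact Multiset.mem_cons_self ν _
    · rw [dif_neg h4]

end Aux4

section Comb
variable {α : Type*} [DecidableEq α] [Fintype α]

lemma sum_mem_toFinset (J : Multiset α) (f : α → ℝ) :
    (∑ a : α, if a ∈ J then f a else 0) = ∑ a ∈ J.toFinset, f a := by
  rw [show (fun a => if a ∈ J then f a else 0)
      = (fun a => if a ∈ J.toFinset then f a else 0) from
    funext fun a => by simp [Multiset.mem_toFinset]]
  rw [Finset.sum_ite_mem, Finset.univ_inter]

lemma insert_self_singleton (a : α) : insert a ({a} : Finset α) = {a} := by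
  simp

lemma pairSwap (c d : α) : (c ::ₘ {d} : Multiset α) = d ::ₘ {c} := by
  rw [← Multiset.cons_zero d, Multiset.cons_swap, Multiset.cons_zero]

set_option maxHeartbeats 2000000 in
lemma comb (T : α → α → Multiset α → ℝ)
    (hT : ∀ a b M, T a b M = T b a M)
    (z1 z2 z3 z4 : α)
    (H0 : (∑ a : α, ∑ b : α, if a ∈ ({z1, z2, z3, z4} : Multiset α) then
        (if b ∈ (({z1, z2, z3, z4} : Multiset α).erase a) then
          (if a = b then (1:ℝ) else 1/2) * T a b ((({z1, z2, z3, z4} : Multiset α).erase a).erase b)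
        else 0)
      else 0) = 0) :
    (if z1 = z2 then (1:ℝ) else 1/2) * ((if z3 = z4 then (1:ℝ) else 1/2) * T z1 z2 {z3, z4}) +
    (if z1 = z3 then (1:ℝ) else 1/2) * ((if z2 = z4 then (1:ℝ) else 1/2) * T z1 z3 {z2, z4}) +
    (if z1 = z4 then (1:ℝ) else 1/2) * ((if z2 = z3 then (1:ℝ) else 1/2) * T z1 z4 {z2, z3}) +
    (if z3 = z4 then (1:ℝ) else 1/2) * ((if z1 = z2 then (1:ℝ) else 1/2) * T z3 z4 {z1, z2}) +
    (if z2 = z4 then (1:ℝ) else 1/2) * ((if z1 = z3 then (1:ℝ) else 1/2) * T z2 z4 {z1, z3}) +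
    (if z2 = z3 then (1:ℝ) else 1/2) * ((if z1 = z4 then (1:ℝ) else 1/2) * T z2 z3 {z1, z4}) = 0 := by
  have H : (∑ a : α, if a ∈ ({z1, z2, z3, z4} : Multiset α) then
      (∑ b : α, if b ∈ (({z1, z2, z3, z4} : Multiset α).erase a) then
        (if a = b then (1:ℝ) else 1/2) * T a b ((({z1, z2, z3, z4} : Multiset α).erase a).erase b)
      else 0)
    else 0) = 0 := by
    refine Eq.trans (Finset.sum_congr rfl fun a _ => ?_) H0
    by_cases h : a ∈ ({z1, z2, z3, z4} : Multiset α)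
    · simp only [if_pos h]
    · simp only [if_neg h, Finset.sum_const_zero]
  clear H0
  simp only [sum_mem_toFinset] at H
  simp only [Multiset.insert_eq_cons] at H ⊢
  by_cases h21 : z1 = z2
  · subst h21
    by_cases h31 : z1 = z3
    · subst h31
      by_cases h41 : z1 = z4
      · subst h41
        -- case 1234
        simp only [ne_eq, Multiset.insert_eq_cons, Multiset.toFinset_cons, Multiset.toFinset_singleton,
      Multiset.toFinset_zero, Multiset.erase_cons_head, Multiset.erase_cons_tail,
      Multiset.erase_singleton, Multiset.cons_zero, Finset.sum_insert, Finset.mem_insert,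
      Finset.mem_singleton, Finset.notMem_empty, Finset.sum_singleton, Finset.sum_empty,
      Finset.insert_idem, insert_self_singleton, eq_self_iff_true, if_true, if_false,
      ite_true, ite_false, not_false_iff, or_self, or_false, false_or, or_true, true_or, not_or, *] at H ⊢
        linarith
      · -- 123
        -- case 123
        have eh41 := Ne.symm h41
        simp only [ne_eq, Multiset.insert_eq_cons, Multiset.toFinset_cons, Multiset.toFinset_singleton,
      Multiset.toFinset_zero, Multiset.erase_cons_head, Multiset.erase_cons_tail,
      Multiset.erase_singleton, Multiset.cons_zero, Finset.sum_insert, Finset.mem_insert,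
      Finset.mem_singleton, Finset.notMem_empty, Finset.sum_singleton, Finset.sum_empty,
      Finset.insert_idem, insert_self_singleton, eq_self_iff_true, if_true, if_false,
      ite_true, ite_false, not_false_iff, or_self, or_false, false_or, or_true, true_or, not_or, *] at H ⊢
        try simp only [pairSwap z4 z1] at H ⊢
        try simp only [hT z4 z1] at H
        try simp only [hT z4 z1]
        linarith
    · by_cases h41 : z1 = z4
      · subst h41
        -- case 124
        have eh31 := Ne.symm h31
        rw [pairSwap z3 z1] at H
        simp only [ne_eq, Multiset.insert_eq_cons, Multiset.toFinset_cons, Multiset.toFinset_singleton,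
      Multiset.toFinset_zero, Multiset.erase_cons_head, Multiset.erase_cons_tail,
      Multiset.erase_singleton, Multiset.cons_zero, Finset.sum_insert, Finset.mem_insert,
      Finset.mem_singleton, Finset.notMem_empty, Finset.sum_singleton, Finset.sum_empty,
      Finset.insert_idem, insert_self_singleton, eq_self_iff_true, if_true, if_false,
      ite_true, ite_false, not_false_iff, or_self, or_false, false_or, or_true, true_or, not_or, *] at H ⊢
        try simp only [pairSwap z3 z1] at H ⊢
        try simp only [hT z3 z1] at H
        try simp only [hT z3 z1]
        linarith
      · by_cases h43 : z3 = z4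
        · subst h43
          -- case 12|34
          have eh31 := Ne.symm h31
          have eh41 := Ne.symm h41
          simp only [ne_eq, Multiset.insert_eq_cons, Multiset.toFinset_cons, Multiset.toFinset_singleton,
      Multiset.toFinset_zero, Multiset.erase_cons_head, Multiset.erase_cons_tail,
      Multiset.erase_singleton, Multiset.cons_zero, Finset.sum_insert, Finset.mem_insert,
      Finset.mem_singleton, Finset.notMem_empty, Finset.sum_singleton, Finset.sum_empty,
      Finset.insert_idem, insert_self_singleton, eq_self_iff_true, if_true, if_false,
      ite_true, ite_false, not_false_iff, or_self, or_false, false_or, or_true, true_or, not_or, *] at H ⊢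
          try simp only [pairSwap z3 z1] at H ⊢
          try simp only [hT z3 z1] at H
          try simp only [hT z3 z1]
          linarith
        · -- 12
          -- case 12
          have eh31 := Ne.symm h31
          have eh41 := Ne.symm h41
          have eh43 := Ne.symm h43
          simp only [ne_eq, Multiset.insert_eq_cons, Multiset.toFinset_cons, Multiset.toFinset_singleton,
      Multiset.toFinset_zero, Multiset.erase_cons_head, Multiset.erase_cons_tail,
      Multiset.erase_singleton, Multiset.cons_zero, Finset.sum_insert, Finset.mem_insert,
      Finset.mem_singleton, Finset.notMem_empty, Finset.sum_singleton, Finset.sum_empty,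
      Finset.insert_idem, insert_self_singleton, eq_self_iff_true, if_true, if_false,
      ite_true, ite_false, not_false_iff, or_self, or_false, false_or, or_true, true_or, not_or, *] at H ⊢
          try simp only [pairSwap z3 z1, pairSwap z4 z1, pairSwap z4 z3] at H ⊢
          try simp only [hT z3 z1, hT z4 z1, hT z4 z3] at H
          try simp only [hT z3 z1, hT z4 z1, hT z4 z3]
          linarith
  · by_cases h31 : z1 = z3
    · subst h31
      by_cases h41 : z1 = z4
      · subst h41
        -- case 134
        have eh21 := Ne.symm h21
        rw [Multiset.cons_swap z2 z1, pairSwap z2 z1] at H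
        simp only [ne_eq, Multiset.insert_eq_cons, Multiset.toFinset_cons, Multiset.toFinset_singleton,
      Multiset.toFinset_zero, Multiset.erase_cons_head, Multiset.erase_cons_tail,
      Multiset.erase_singleton, Multiset.cons_zero, Finset.sum_insert, Finset.mem_insert,
      Finset.mem_singleton, Finset.notMem_empty, Finset.sum_singleton, Finset.sum_empty,
      Finset.insert_idem, insert_self_singleton, eq_self_iff_true, if_true, if_false,
      ite_true, ite_false, not_false_iff, or_self, or_false, false_or, or_true, true_or, not_or, *] at H ⊢
        try simp only [pairSwap z2 z1] at H ⊢
        try simp only [hT z2 z1] at H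
        try simp only [hT z2 z1]
        linarith
      · by_cases h42 : z2 = z4
        · subst h42
          -- case 13|24
          have eh21 := Ne.symm h21
          have eh41 := Ne.symm h41
          rw [Multiset.cons_swap z2 z1] at H
          simp only [ne_eq, Multiset.insert_eq_cons, Multiset.toFinset_cons, Multiset.toFinset_singleton,
      Multiset.toFinset_zero, Multiset.erase_cons_head, Multiset.erase_cons_tail,
      Multiset.erase_singleton, Multiset.cons_zero, Finset.sum_insert, Finset.mem_insert,
      Finset.mem_singleton, Finset.notMem_empty, Finset.sum_singleton, Finset.sum_empty,
      Finset.insert_idem, insert_self_singleton, eq_self_iff_true, if_true, if_false,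
      ite_true, ite_false, not_false_iff, or_self, or_false, false_or, or_true, true_or, not_or, *] at H ⊢
          try simp only [pairSwap z2 z1] at H ⊢
          try simp only [hT z2 z1] at H
          try simp only [hT z2 z1]
          linarith
        · -- 13
          -- case 13
          have eh21 := Ne.symm h21
          have eh41 := Ne.symm h41
          have eh42 := Ne.symm h42
          rw [Multiset.cons_swap z2 z1] at H
          simp only [ne_eq, Multiset.insert_eq_cons, Multiset.toFinset_cons, Multiset.toFinset_singleton,
      Multiset.toFinset_zero, Multiset.erase_cons_head, Multiset.erase_cons_tail,
      Multiset.erase_singleton, Multiset.cons_zero, Finset.sum_insert, Finset.mem_insert,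
      Finset.mem_singleton, Finset.notMem_empty, Finset.sum_singleton, Finset.sum_empty,
      Finset.insert_idem, insert_self_singleton, eq_self_iff_true, if_true, if_false,
      ite_true, ite_false, not_false_iff, or_self, or_false, false_or, or_true, true_or, not_or, *] at H ⊢
          try simp only [pairSwap z2 z1, pairSwap z4 z1, pairSwap z4 z2] at H ⊢
          try simp only [hT z2 z1, hT z4 z1, hT z4 z2] at H
          try simp only [hT z2 z1, hT z4 z1, hT z4 z2]
          linarith
    · by_cases h32 : z2 = z3
      · subst h32
        by_cases h41 : z1 = z4
        · subst h41
          -- case 14|23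
          have eh21 := Ne.symm h21
          rw [pairSwap z2 z1, Multiset.cons_swap z2 z1] at H
          simp only [ne_eq, Multiset.insert_eq_cons, Multiset.toFinset_cons, Multiset.toFinset_singleton,
      Multiset.toFinset_zero, Multiset.erase_cons_head, Multiset.erase_cons_tail,
      Multiset.erase_singleton, Multiset.cons_zero, Finset.sum_insert, Finset.mem_insert,
      Finset.mem_singleton, Finset.notMem_empty, Finset.sum_singleton, Finset.sum_empty,
      Finset.insert_idem, insert_self_singleton, eq_self_iff_true, if_true, if_false,
      ite_true, ite_false, not_false_iff, or_self, or_false, false_or, or_true, true_or, not_or, *] at H ⊢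
          try simp only [pairSwap z2 z1] at H ⊢
          try simp only [hT z2 z1] at H
          try simp only [hT z2 z1]
          linarith
        · by_cases h42 : z2 = z4
          · subst h42
            -- case 234
            have eh21 := Ne.symm h21
            have eh41 := Ne.symm h41
            simp only [ne_eq, Multiset.insert_eq_cons, Multiset.toFinset_cons, Multiset.toFinset_singleton,
      Multiset.toFinset_zero, Multiset.erase_cons_head, Multiset.erase_cons_tail,
      Multiset.erase_singleton, Multiset.cons_zero, Finset.sum_insert, Finset.mem_insert,
      Finset.mem_singleton, Finset.notMem_empty, Finset.sum_singleton, Finset.sum_empty,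
      Finset.insert_idem, insert_self_singleton, eq_self_iff_true, if_true, if_false,
      ite_true, ite_false, not_false_iff, or_self, or_false, false_or, or_true, true_or, not_or, *] at H ⊢
            try simp only [pairSwap z2 z1] at H ⊢
            try simp only [hT z2 z1] at H
            try simp only [hT z2 z1]
            linarith
          · -- 23
            -- case 23
            have eh21 := Ne.symm h21
            have eh41 := Ne.symm h41
            have eh42 := Ne.symm h42
            simp only [ne_eq, Multiset.insert_eq_cons, Multiset.toFinset_cons, Multiset.toFinset_singleton,
      Multiset.toFinset_zero, Multiset.erase_cons_head, Multiset.erase_cons_tail,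
      Multiset.erase_singleton, Multiset.cons_zero, Finset.sum_insert, Finset.mem_insert,
      Finset.mem_singleton, Finset.notMem_empty, Finset.sum_singleton, Finset.sum_empty,
      Finset.insert_idem, insert_self_singleton, eq_self_iff_true, if_true, if_false,
      ite_true, ite_false, not_false_iff, or_self, or_false, false_or, or_true, true_or, not_or, *] at H ⊢
            try simp only [pairSwap z2 z1, pairSwap z4 z1, pairSwap z4 z2] at H ⊢
            try simp only [hT z2 z1, hT z4 z1, hT z4 z2] at H
            try simp only [hT z2 z1, hT z4 z1, hT z4 z2]
            linarith
      · by_cases h41 : z1 = z4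
        · subst h41
          -- case 14
          have eh21 := Ne.symm h21
          have eh31 := Ne.symm h31
          have eh32 := Ne.symm h32
          rw [pairSwap z3 z1, Multiset.cons_swap z2 z1] at H
          simp only [ne_eq, Multiset.insert_eq_cons, Multiset.toFinset_cons, Multiset.toFinset_singleton,
      Multiset.toFinset_zero, Multiset.erase_cons_head, Multiset.erase_cons_tail,
      Multiset.erase_singleton, Multiset.cons_zero, Finset.sum_insert, Finset.mem_insert,
      Finset.mem_singleton, Finset.notMem_empty, Finset.sum_singleton, Finset.sum_empty,
      Finset.insert_idem, insert_self_singleton, eq_self_iff_true, if_true, if_false,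
      ite_true, ite_false, not_false_iff, or_self, or_false, false_or, or_true, true_or, not_or, *] at H ⊢
          try simp only [pairSwap z2 z1, pairSwap z3 z1, pairSwap z3 z2] at H ⊢
          try simp only [hT z2 z1, hT z3 z1, hT z3 z2] at H
          try simp only [hT z2 z1, hT z3 z1, hT z3 z2]
          linarith
        · by_cases h42 : z2 = z4
          · subst h42
            -- case 24
            have eh21 := Ne.symm h21
            have eh31 := Ne.symm h31
            have eh32 := Ne.symm h32
            have eh41 := Ne.symm h41
            rw [pairSwap z3 z2] at H
            simp only [ne_eq, Multiset.insert_eq_cons, Multiset.toFinset_cons, Multiset.toFinset_singleton,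
      Multiset.toFinset_zero, Multiset.erase_cons_head, Multiset.erase_cons_tail,
      Multiset.erase_singleton, Multiset.cons_zero, Finset.sum_insert, Finset.mem_insert,
      Finset.mem_singleton, Finset.notMem_empty, Finset.sum_singleton, Finset.sum_empty,
      Finset.insert_idem, insert_self_singleton, eq_self_iff_true, if_true, if_false,
      ite_true, ite_false, not_false_iff, or_self, or_false, false_or, or_true, true_or, not_or, *] at H ⊢
            try simp only [pairSwap z2 z1, pairSwap z3 z1, pairSwap z3 z2] at H ⊢
            try simp only [hT z2 z1, hT z3 z1, hT z3 z2] at H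
            try simp only [hT z2 z1, hT z3 z1, hT z3 z2]
            linarith
          · by_cases h43 : z3 = z4
            · subst h43
              -- case 34
              have eh21 := Ne.symm h21
              have eh31 := Ne.symm h31
              have eh32 := Ne.symm h32
              have eh41 := Ne.symm h41
              have eh42 := Ne.symm h42
              simp only [ne_eq, Multiset.insert_eq_cons, Multiset.toFinset_cons, Multiset.toFinset_singleton,
      Multiset.toFinset_zero, Multiset.erase_cons_head, Multiset.erase_cons_tail,
      Multiset.erase_singleton, Multiset.cons_zero, Finset.sum_insert, Finset.mem_insert,
      Finset.mem_singleton, Finset.notMem_empty, Finset.sum_singleton, Finset.sum_empty,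
      Finset.insert_idem, insert_self_singleton, eq_self_iff_true, if_true, if_false,
      ite_true, ite_false, not_false_iff, or_self, or_false, false_or, or_true, true_or, not_or, *] at H ⊢
              try simp only [pairSwap z2 z1, pairSwap z3 z1, pairSwap z3 z2] at H ⊢
              try simp only [hT z2 z1, hT z3 z1, hT z3 z2] at H
              try simp only [hT z2 z1, hT z3 z1, hT z3 z2]
              linarith
            · -- all distinct
              -- case all-distinct
              have eh21 := Ne.symm h21
              have eh31 := Ne.symm h31
              have eh32 := Ne.symm h32
              have eh41 := Ne.symm h41
              have eh42 := Ne.symm h42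
              have eh43 := Ne.symm h43
              simp only [ne_eq, Multiset.insert_eq_cons, Multiset.toFinset_cons, Multiset.toFinset_singleton,
      Multiset.toFinset_zero, Multiset.erase_cons_head, Multiset.erase_cons_tail,
      Multiset.erase_singleton, Multiset.cons_zero, Finset.sum_insert, Finset.mem_insert,
      Finset.mem_singleton, Finset.notMem_empty, Finset.sum_singleton, Finset.sum_empty,
      Finset.insert_idem, insert_self_singleton, eq_self_iff_true, if_true, if_false,
      ite_true, ite_false, not_false_iff, or_self, or_false, false_or, or_true, true_or, not_or, *] at H ⊢
              try simp only [pairSwap z2 z1, pairSwap z3 z1, pairSwap z4 z1, pairSwap z3 z2, pairSwap z4 z2, pairSwap z4 z3] at H ⊢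
              try simp only [hT z2 z1, hT z3 z1, hT z3 z2, hT z4 z1, hT z4 z2, hT z4 z3] at H
              try simp only [hT z2 z1, hT z3 z1, hT z3 z2, hT z4 z1, hT z4 z2, hT z4 z3]
              linarith

end Comb

section Assembly
variable {n N : ℕ} {L : JetSpace n N 4 → ℝ}

lemma sym_coe_mk {k : ℕ} (M : Multiset (Fin n)) (h : Multiset.card M = k) :
    ((⟨M, h⟩ : Sym (Fin n) k) : Multiset (Fin n)) = M := rfl

/-- The second-derivative atom. -/
noncomputable def Tfun (n N : ℕ) (L : JetSpace n N 4 → ℝ) (A B : Fin N)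
    (p : JetSpace n N 4) (a b : Fin n) (M : Multiset (Fin n)) : ℝ :=
  if h : Multiset.card M = 2 then
    fderiv ℝ (fun q => fderiv ℝ L q (jetDir n N 4 A (idx2 n 4 (by omega) a b))) p
      (jetDir n N 4 B ⟨⟨2, by omega⟩, ⟨M, h⟩⟩)
  else 0

lemma contDiff_pd2 (hL : ContDiff ℝ (⊤ : ℕ∞) L) (C : Fin N) (a b : Fin n) :
    ContDiff ℝ (⊤ : ℕ∞) (pd2 n N C a b L) := by
  unfold pd2
  exact contDiff_const.mul (contDiff_fderiv_apply hL _)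

lemma fderiv_pd2 (hL : ContDiff ℝ (⊤ : ℕ∞) L) (C : Fin N) (a b : Fin n) (q : JetSpace n N 4) :
    fderiv ℝ (pd2 n N C a b L) q = (if a = b then (1:ℝ) else 1/2) •
      fderiv ℝ (fun q' => fderiv ℝ L q' (jetDir n N 4 C (idx2 n 4 (by omega) a b))) q := by
  unfold pd2
  exact fderiv_const_mul ((contDiff_fderiv_apply hL _).differentiable (by simp) q) _

lemma pd2_fderiv_high (hL : ContDiff ℝ (⊤ : ℕ∞) L)
    (hord : ∀ (p q : JetSpace n N 4), p.1 = q.1 →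
      (∀ A s, s.1.val ≤ 2 → p.2 A s = q.2 A s) → L p = L q)
    (C D : Fin N) (a b : Fin n) (s : JetIdx n 4) (hs : 3 ≤ s.1.val) (q : JetSpace n N 4) :
    fderiv ℝ (pd2 n N C a b L) q (jetDir n N 4 D s) = 0 := by
  rw [fderiv_pd2 hL C a b q, ContinuousLinearMap.smul_apply,
    key0 hL (fun q' => fderiv_high hL hord D s hs q') _ q, smul_zero]

end Assembly

section BigH
variable {n N : ℕ} {L : JetSpace n N 4 → ℝ}

lemma hterm_eq (hL : ContDiff ℝ (⊤ : ℕ∞) L)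
    (hord : ∀ (p q : JetSpace n N 4), p.1 = q.1 →
      (∀ A s, s.1.val ≤ 2 → p.2 A s = q.2 A s) → L p = L q)
    (A B : Fin N) (p : JetSpace n N 4) (J : Multiset (Fin n)) (hJ4 : Multiset.card J = 4)
    (a b : Fin n) :
    fderiv ℝ (Dtot n N 4 a (fun q' => Dtot n N 4 b (pd2 n N A a b L) q')) p
        (jetDir n N 4 B ⟨⟨4, by omega⟩, ⟨J, hJ4⟩⟩)
      = if a ∈ J then (if b ∈ J.erase a then
          (if a = b then (1:ℝ) else 1/2) * Tfun n N L A B p a b ((J.erase a).erase b)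
        else 0) else 0 := by
  set t4 : JetIdx n 4 := ⟨⟨4, by omega⟩, ⟨J, hJ4⟩⟩ with ht4
  have hpdc : ContDiff ℝ (⊤ : ℕ∞) (pd2 n N A a b L) := contDiff_pd2 hL A a b
  -- pd2 has zero fderiv in all high jet directions
  have hzero3 : ∀ (s : JetIdx n 4), 3 ≤ s.1.val → ∀ q,
      fderiv ℝ (pd2 n N A a b L) q (jetDir n N 4 B s) = 0 :=
    fun s hs q => pd2_fderiv_high hL hord A B a b s hs q
  have ht4ord : 3 ≤ t4.1.val := by norm_num [ht4]
  -- the inner Dtot has zero fderiv in direction jetDir B t4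
  have hvG : ∀ q, fderiv ℝ (Dtot n N 4 b (pd2 n N A a b L)) q (jetDir n N 4 B t4) = 0 := by
    intro q
    rw [Dtot_fderiv hpdc (fun q' => hzero3 t4 ht4ord q') b q,
      sum_pick B t4 3 rfl b (fun C s => fderiv ℝ (pd2 n N A a b L) q (jetDir n N 4 C s))]
    by_cases hb : b ∈ (t4.2 : Multiset (Fin n))
    · rw [dif_pos hb]
      exact hzero3 _ (by norm_num) q
    · rw [dif_neg hb]
  -- outer differentiation
  rw [show (fun q' => Dtot n N 4 b (pd2 n N A a b L) q') = Dtot n N 4 b (pd2 n N A a b L)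
      from rfl,
    Dtot_fderiv (contDiff_Dtot hpdc b) hvG a p,
    sum_pick B t4 3 rfl a
      (fun C s => fderiv ℝ (Dtot n N 4 b (pd2 n N A a b L)) p (jetDir n N 4 C s))]
  have ht4coe : (t4.2 : Multiset (Fin n)) = J := rfl
  by_cases ha : a ∈ J
  · rw [dif_pos (show a ∈ (t4.2 : Multiset (Fin n)) from ha), if_pos ha]
    -- compute fderiv of inner Dtot in direction jetDir B s3
    set M3 : Multiset (Fin n) := (t4.2 : Multiset (Fin n)).erase a with hM3
    have hM3J : M3 = J.erase a := rfl
    have hM3card : Multiset.card M3 = 3 := by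
      rw [hM3J, Multiset.card_erase_of_mem ha, hJ4]; rfl
    set s3 : JetIdx n 4 := ⟨⟨3, by omega⟩, ⟨M3, hM3card⟩⟩ with hs3
    have hs3ord : 3 ≤ s3.1.val := by norm_num [hs3]
    rw [Dtot_fderiv hpdc (fun q' => hzero3 s3 hs3ord q') b p,
      sum_pick B s3 2 rfl b (fun C s => fderiv ℝ (pd2 n N A a b L) p (jetDir n N 4 C s))]
    have hs3coe : (s3.2 : Multiset (Fin n)) = J.erase a := rfl
    by_cases hb : b ∈ J.erase a
    · rw [dif_pos (show b ∈ (s3.2 : Multiset (Fin n)) from hb), if_pos hb]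
      have hM2card : Multiset.card ((J.erase a).erase b) = 2 := by
        rw [Multiset.card_erase_of_mem hb, Multiset.card_erase_of_mem ha, hJ4]; rfl
      rw [fderiv_pd2 hL A a b p, ContinuousLinearMap.smul_apply]
      unfold Tfun
      rw [dif_pos hM2card]
      rfl
    · rw [dif_neg (show ¬ b ∈ (s3.2 : Multiset (Fin n)) from hb), if_neg hb]
  · rw [dif_neg (show ¬ a ∈ (t4.2 : Multiset (Fin n)) from ha), if_neg ha]

end BigH

section BigH2
variable {n N : ℕ} {L : JetSpace n N 4 → ℝ}

lemma bigH (hL : ContDiff ℝ (⊤ : ℕ∞) L)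
    (hord : ∀ (p q : JetSpace n N 4), p.1 = q.1 →
      (∀ A s, s.1.val ≤ 2 → p.2 A s = q.2 A s) → L p = L q)
    (htriv : ∀ (A : Fin N) (p : JetSpace n N 4),
      fderiv ℝ L p (jetDir n N 4 A (idx0 n 4 (by norm_num))) -
        (∑ μ : Fin n, Dtot n N 4 μ
          (fun q => fderiv ℝ L q (jetDir n N 4 A (idx1 n 4 (by norm_num) μ))) p) +
        (∑ μ : Fin n, ∑ ν : Fin n, Dtot n N 4 μ
          (fun q => Dtot n N 4 ν (pd2 n N A μ ν L) q) p) = 0)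
    (A B : Fin N) (p : JetSpace n N 4) (J : Multiset (Fin n)) (hJ4 : Multiset.card J = 4) :
    (∑ a : Fin n, ∑ b : Fin n, if a ∈ J then (if b ∈ J.erase a then
        (if a = b then (1:ℝ) else 1/2) * Tfun n N L A B p a b ((J.erase a).erase b)
      else 0) else 0) = 0 := by
  have hv4L : ∀ q, fderiv ℝ L q (jetDir n N 4 B ⟨⟨4, by omega⟩, ⟨J, hJ4⟩⟩) = 0 :=
    fderiv_high hL hord B _ (by exact (by norm_num : (3:ℕ) ≤ 4))
  have Lh3 : ∀ (s : JetIdx n 4), 3 ≤ s.1.val → ∀ q, fderiv ℝ L q (jetDir n N 4 B s) = 0 :=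
    fun s hs q => fderiv_high hL hord B s hs q
  -- differentiability of the three pieces
  have hd1 : ContDiff ℝ (⊤ : ℕ∞) (fun q => fderiv ℝ L q (jetDir n N 4 A (idx0 n 4 (by norm_num)))) :=
    contDiff_fderiv_apply hL _
  have hd2 : ContDiff ℝ (⊤ : ℕ∞) (fun q : JetSpace n N 4 => ∑ μ' : Fin n, Dtot n N 4 μ'
      (fun q' => fderiv ℝ L q' (jetDir n N 4 A (idx1 n 4 (by norm_num) μ'))) q) :=
    ContDiff.sum fun μ' _ => contDiff_Dtot (contDiff_fderiv_apply hL _) μ'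
  have hd3 : ContDiff ℝ (⊤ : ℕ∞) (fun q : JetSpace n N 4 => ∑ μ' : Fin n, ∑ ν' : Fin n, Dtot n N 4 μ'
      (fun q' => Dtot n N 4 ν' (pd2 n N A μ' ν' L) q') q) :=
    ContDiff.sum fun μ' _ => ContDiff.sum fun ν' _ =>
      contDiff_Dtot (contDiff_Dtot (contDiff_pd2 hL A μ' ν') ν') μ'
  -- the triviality identity as an identity of functions
  have hz : (fun q : JetSpace n N 4 =>
      fderiv ℝ L q (jetDir n N 4 A (idx0 n 4 (by norm_num))) -
        (∑ μ' : Fin n, Dtot n N 4 μ'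
          (fun q' => fderiv ℝ L q' (jetDir n N 4 A (idx1 n 4 (by norm_num) μ'))) q) +
        (∑ μ' : Fin n, ∑ ν' : Fin n, Dtot n N 4 μ'
          (fun q' => Dtot n N 4 ν' (pd2 n N A μ' ν' L) q') q)) = fun _ => (0:ℝ) :=
    funext fun q => htriv A q
  have h0 : fderiv ℝ (fun q : JetSpace n N 4 =>
      fderiv ℝ L q (jetDir n N 4 A (idx0 n 4 (by norm_num))) -
        (∑ μ' : Fin n, Dtot n N 4 μ'
          (fun q' => fderiv ℝ L q' (jetDir n N 4 A (idx1 n 4 (by norm_num) μ'))) q) +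
        (∑ μ' : Fin n, ∑ ν' : Fin n, Dtot n N 4 μ'
          (fun q' => Dtot n N 4 ν' (pd2 n N A μ' ν' L) q') q)) p
      (jetDir n N 4 B ⟨⟨4, by omega⟩, ⟨J, hJ4⟩⟩) = 0 := by
    rw [hz]; simp
  rw [fderiv_fun_add ((hd1.differentiable (by simp) p).fun_sub (hd2.differentiable (by simp) p))
      (hd3.differentiable (by simp) p), fderiv_fun_sub (hd1.differentiable (by simp) p)
      (hd2.differentiable (by simp) p), ContinuousLinearMap.add_apply,
      ContinuousLinearMap.sub_apply] at h0
  -- first piece vanishes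
  have hA1 : fderiv ℝ (fun q => fderiv ℝ L q (jetDir n N 4 A (idx0 n 4 (by norm_num)))) p
      (jetDir n N 4 B ⟨⟨4, by omega⟩, ⟨J, hJ4⟩⟩) = 0 := key0 hL hv4L _ p
  -- second piece vanishes
  have hA2 : fderiv ℝ (fun q : JetSpace n N 4 => ∑ μ' : Fin n, Dtot n N 4 μ'
      (fun q' => fderiv ℝ L q' (jetDir n N 4 A (idx1 n 4 (by norm_num) μ'))) q) p
      (jetDir n N 4 B ⟨⟨4, by omega⟩, ⟨J, hJ4⟩⟩) = 0 := by
    rw [fderiv_fun_sum (fun μ' _ =>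
      (contDiff_Dtot (contDiff_fderiv_apply hL _) μ').differentiable (by simp) p),
      ContinuousLinearMap.sum_apply]
    apply Finset.sum_eq_zero
    intro μ' _
    rw [Dtot_fderiv (contDiff_fderiv_apply hL _)
        (fun q => key0 hL hv4L (jetDir n N 4 A (idx1 n 4 (by norm_num) μ')) q) μ' p]
    erw [sum_pick B ⟨⟨4, by omega⟩, ⟨J, hJ4⟩⟩ 3 rfl μ' (fun C s => fderiv ℝ
        (fun q' => fderiv ℝ L q' (jetDir n N 4 A (idx1 n 4 (by norm_num) μ')))
        p (jetDir n N 4 C s))]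
    by_cases hm : μ' ∈ (((⟨⟨4, by omega⟩, ⟨J, hJ4⟩⟩ : JetIdx n 4)).2 : Multiset (Fin n))
    · rw [dif_pos hm]
      exact key0 hL (Lh3 _ (by exact (by norm_num : (3:ℕ) ≤ 3)) ) _ p
    · rw [dif_neg hm]
  -- third piece
  have hA3 : fderiv ℝ (fun q : JetSpace n N 4 => ∑ μ' : Fin n, ∑ ν' : Fin n, Dtot n N 4 μ'
      (fun q' => Dtot n N 4 ν' (pd2 n N A μ' ν' L) q') q) p
      (jetDir n N 4 B ⟨⟨4, by omega⟩, ⟨J, hJ4⟩⟩)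
      = ∑ a : Fin n, ∑ b : Fin n, if a ∈ J then (if b ∈ J.erase a then
          (if a = b then (1:ℝ) else 1/2) * Tfun n N L A B p a b ((J.erase a).erase b)
        else 0) else 0 := by
    rw [fderiv_fun_sum (fun μ' _ => DifferentiableAt.fun_sum (fun ν' _ =>
        (contDiff_Dtot (contDiff_Dtot (contDiff_pd2 hL A μ' ν') ν') μ').differentiable
          (by simp) p)), ContinuousLinearMap.sum_apply]
    apply Finset.sum_congr rfl
    intro a _
    rw [fderiv_fun_sum (fun ν' _ =>
        (contDiff_Dtot (contDiff_Dtot (contDiff_pd2 hL A a ν') ν') a).differentiable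
          (by simp) p), ContinuousLinearMap.sum_apply]
    apply Finset.sum_congr rfl
    intro b _
    exact hterm_eq hL hord A B p J hJ4 a b
  rw [hA1, hA2, hA3] at h0
  linarith

end BigH2

section Final
variable {n N : ℕ} {L : JetSpace n N 4 → ℝ}

lemma S_symm (hL : ContDiff ℝ (⊤ : ℕ∞) L) (p v w : JetSpace n N 4) :
    fderiv ℝ (fun q => fderiv ℝ L q v) p w = fderiv ℝ (fun q => fderiv ℝ L q w) p v := by
  have hdf : ContDiff ℝ (⊤ : ℕ∞) (fderiv ℝ L) := hL.fderiv_right (by simp)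
  have hsymm : ∀ a b : JetSpace n N 4,
      fderiv ℝ (fderiv ℝ L) p a b = fderiv ℝ (fderiv ℝ L) p b a :=
    second_derivative_symmetric (fun y => (hL.differentiable (by simp) y).hasFDerivAt)
      ((hdf.differentiable (by simp) p).hasFDerivAt)
  rw [fderiv_fderiv_apply hL v p, fderiv_fderiv_apply hL w p]
  exact hsymm w v

lemma pd2A_eq (hL : ContDiff ℝ (⊤ : ℕ∞) L) (A B : Fin N) (p : JetSpace n N 4) (a b c d : Fin n) :
    pd2 n N A a b (pd2 n N B c d L) p = (if a = b then (1:ℝ) else 1/2) *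
      ((if c = d then (1:ℝ) else 1/2) * Tfun n N L A B p a b {c, d}) := by
  have h1 : pd2 n N A a b (pd2 n N B c d L) p = (if a = b then (1:ℝ) else 1/2) *
      ((if c = d then (1:ℝ) else 1/2) *
        fderiv ℝ (fun q' => fderiv ℝ L q' (jetDir n N 4 B (idx2 n 4 (by omega) c d))) p
          (jetDir n N 4 A (idx2 n 4 (by omega) a b))) := by
    show (if a = b then (1:ℝ) else 1/2) * fderiv ℝ (pd2 n N B c d L) p
        (jetDir n N 4 A (idx2 n 4 (by omega) a b)) = _
    rw [fderiv_pd2 hL B c d p]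
    rfl
  rw [h1, S_symm hL p _ _]
  have h2 : fderiv ℝ (fun q' => fderiv ℝ L q'
      (jetDir n N 4 A (idx2 n 4 (by omega) a b))) p
      (jetDir n N 4 B (idx2 n 4 (by omega) c d)) = Tfun n N L A B p a b {c, d} := by
    unfold Tfun
    rw [dif_pos (show Multiset.card ({c, d} : Multiset (Fin n)) = 2 from rfl)]
    rfl
  rw [h2]

lemma pd2B_eq (hL : ContDiff ℝ (⊤ : ℕ∞) L) (A B : Fin N) (p : JetSpace n N 4) (a b c d : Fin n) :
    pd2 n N B a b (pd2 n N A c d L) p = (if a = b then (1:ℝ) else 1/2) *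
      ((if c = d then (1:ℝ) else 1/2) * Tfun n N L A B p c d {a, b}) := by
  have h1 : pd2 n N B a b (pd2 n N A c d L) p = (if a = b then (1:ℝ) else 1/2) *
      ((if c = d then (1:ℝ) else 1/2) *
        fderiv ℝ (fun q' => fderiv ℝ L q' (jetDir n N 4 A (idx2 n 4 (by omega) c d))) p
          (jetDir n N 4 B (idx2 n 4 (by omega) a b))) := by
    show (if a = b then (1:ℝ) else 1/2) * fderiv ℝ (pd2 n N A c d L) p
        (jetDir n N 4 B (idx2 n 4 (by omega) a b)) = _
    rw [fderiv_pd2 hL A c d p]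
    rfl
  rw [h1]
  have h2 : fderiv ℝ (fun q' => fderiv ℝ L q'
      (jetDir n N 4 A (idx2 n 4 (by omega) c d))) p
      (jetDir n N 4 B (idx2 n 4 (by omega) a b)) = Tfun n N L A B p c d {a, b} := by
    unfold Tfun
    rw [dif_pos (show Multiset.card ({a, b} : Multiset (Fin n)) = 2 from rfl)]
    rfl
  rw [h2]

lemma Tfun_symm (A B : Fin N) (p : JetSpace n N 4) (a b : Fin n) (M : Multiset (Fin n)) :
    Tfun n N L A B p a b M = Tfun n N L A B p b a M := by
  unfold Tfun
  rw [show idx2 n 4 (by omega : 2 < 4 + 1) a b = idx2 n 4 (by omega) b a from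
    jetIdx_eq rfl (by exact Multiset.cons_swap a b 0)]

lemma pairSwapEq (x y : Fin n) : ({x, y} : Multiset (Fin n)) = {y, x} := by
  rw [Multiset.insert_eq_cons, Multiset.insert_eq_cons, pairSwap]

lemma cif (x y : Fin n) : (if x = y then (1:ℝ) else 1/2) = (if y = x then (1:ℝ) else 1/2) := by
  by_cases h : x = y
  · subst h; rfl
  · rw [if_neg h, if_neg (Ne.symm h)]

end Final


/-- For a second-order Lagrangian `L(x, ψ^A, ψ^A_ν, ψ^A_{νρ})`, the triviality
condition `∂_A L − D_μ ∂^μ_A L + D_μ D_ν ∂^{μν}_A L = 0` (as an identity in the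
fourth-order jet variables) implies
`Σ_{cyclic (ρ_1,ρ_2,ρ_3)} ∂^{μρ_1}_A ∂^{ρ_2ρ_3}_B L + (A ↔ B) = 0`. -/
theorem triviality_implies_symmetrized_condition (n N : ℕ)
    (L : JetSpace n N 4 → ℝ) (hL : ContDiff ℝ (⊤ : ℕ∞) L)
    (hord : ∀ (p q : JetSpace n N 4), p.1 = q.1 →
      (∀ A s, s.1.val ≤ 2 → p.2 A s = q.2 A s) → L p = L q)
    (htriv : ∀ (A : Fin N) (p : JetSpace n N 4),
      fderiv ℝ L p (jetDir n N 4 A (idx0 n 4 (by omega))) -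
        (∑ μ : Fin n, Dtot n N 4 μ
          (fun q => fderiv ℝ L q (jetDir n N 4 A (idx1 n 4 (by omega) μ))) p) +
        (∑ μ : Fin n, ∑ ν : Fin n, Dtot n N 4 μ
          (fun q => Dtot n N 4 ν (pd2 n N A μ ν L) q) p) = 0) :
    ∀ (μ ρ₁ ρ₂ ρ₃ : Fin n) (A B : Fin N) (p : JetSpace n N 4),
      (pd2 n N A μ ρ₁ (pd2 n N B ρ₂ ρ₃ L) p +
        pd2 n N A μ ρ₂ (pd2 n N B ρ₃ ρ₁ L) p +
        pd2 n N A μ ρ₃ (pd2 n N B ρ₁ ρ₂ L) p) +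
      (pd2 n N B μ ρ₁ (pd2 n N A ρ₂ ρ₃ L) p +
        pd2 n N B μ ρ₂ (pd2 n N A ρ₃ ρ₁ L) p +
        pd2 n N B μ ρ₃ (pd2 n N A ρ₁ ρ₂ L) p) = 0 := by
  intro μ ρ₁ ρ₂ ρ₃ A B p
  have H := bigH hL hord htriv A B p {μ, ρ₁, ρ₂, ρ₃} rfl
  have C := comb (Tfun n N L A B p) (Tfun_symm A B p) μ ρ₁ ρ₂ ρ₃ H
  rw [pd2A_eq hL A B p μ ρ₁ ρ₂ ρ₃, pd2A_eq hL A B p μ ρ₂ ρ₃ ρ₁, pd2A_eq hL A B p μ ρ₃ ρ₁ ρ₂,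
    pd2B_eq hL A B p μ ρ₁ ρ₂ ρ₃, pd2B_eq hL A B p μ ρ₂ ρ₃ ρ₁, pd2B_eq hL A B p μ ρ₃ ρ₁ ρ₂]
  rw [cif ρ₃ ρ₁, pairSwapEq ρ₃ ρ₁]
  rw [show Tfun n N L A B p ρ₃ ρ₁ {μ, ρ₂} = Tfun n N L A B p ρ₁ ρ₃ {μ, ρ₂} from
    Tfun_symm A B p ρ₃ ρ₁ _]
  linarith [C]
end
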